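/- arXiv:2503.10555 — 5 statements merged into one kernel-verified Lean document; each statement's English description precedes it below -/
import Mathlib

section
/- Let X be an R^d-valued random variable with E[X]=0 and |X| ≤ r almost surely. Then uniformly for a_1, a_2 in compact subsets of R^d, E[e^{⟨a_1+a_2,X⟩}] / E[e^{⟨a_2,X⟩}] = exp( (1/2) a_1^T E[X X^T] (a_1 + 2a_2) + O(|a_1||a_2|^2 + |a_1|^3) ). -/
open MeasureTheory RealInnerProductSpace

private lemma expT1 (x : ℝ) : |Real.exp x - 1| ≤ 2 * |x| * Real.exp |x| := by
  rcases le_or_gt |x| 1 with h | h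
  · obtain ⟨hl, hu⟩ := abs_le.1 (Real.exp_bound h (n := 1) (by norm_num))
    simp [Finset.sum_range_succ] at hl hu
    have hx : (1:ℝ) ≤ Real.exp |x| := Real.one_le_exp (abs_nonneg x)
    rw [abs_le]
    constructor <;> nlinarith [abs_nonneg x]
  · have h1 : Real.exp x ≤ Real.exp |x| := Real.exp_le_exp.2 (le_abs_self x)
    have h2 : (0:ℝ) < Real.exp x := Real.exp_pos x
    have hx : (1:ℝ) ≤ Real.exp |x| := Real.one_le_exp (abs_nonneg x)
    rw [abs_le]
    constructor <;> nlinarith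

private lemma expT2 (x : ℝ) : |Real.exp x - 1 - x| ≤ 3 * x^2 * Real.exp |x| := by
  rcases le_or_gt |x| 1 with h | h
  · obtain ⟨hl, hu⟩ := abs_le.1 (Real.exp_bound h (n := 2) (by norm_num))
    simp [Finset.sum_range_succ] at hl hu
    have hx : (1:ℝ) ≤ Real.exp |x| := Real.one_le_exp (abs_nonneg x)
    rw [abs_le]
    constructor <;> nlinarith [sq_nonneg x]
  · have h1 : Real.exp x ≤ Real.exp |x| := Real.exp_le_exp.2 (le_abs_self x)
    have h2 : (0:ℝ) < Real.exp x := Real.exp_pos x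
    have hx : (1:ℝ) ≤ Real.exp |x| := Real.one_le_exp (abs_nonneg x)
    have h3 : 1 ≤ x^2 := by nlinarith [sq_abs x]
    have h4 : |x| ≤ x^2 := by nlinarith [sq_abs x, abs_nonneg x]
    rw [abs_le]
    constructor <;> nlinarith [le_abs_self x, neg_abs_le x]

private lemma expT3 (x : ℝ) : |Real.exp x - 1 - x - x^2/2| ≤ 4 * |x|^3 * Real.exp |x| := by
  rcases le_or_gt |x| 1 with h | h
  · obtain ⟨hl, hu⟩ := abs_le.1 (Real.exp_bound h (n := 3) (by norm_num))
    simp [Finset.sum_range_succ] at hl hu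
    have hx : (1:ℝ) ≤ Real.exp |x| := Real.one_le_exp (abs_nonneg x)
    have h3 : (0:ℝ) ≤ |x|^3 := by positivity
    norm_num [Nat.factorial] at hl hu
    rw [abs_le]
    constructor <;> nlinarith [abs_nonneg x, mul_le_mul_of_nonneg_left hx h3]
  · have h1 : Real.exp x ≤ Real.exp |x| := Real.exp_le_exp.2 (le_abs_self x)
    have h2 : (0:ℝ) < Real.exp x := Real.exp_pos x
    have hx : (1:ℝ) ≤ Real.exp |x| := Real.one_le_exp (abs_nonneg x)
    have h0 : 1 ≤ |x| := h.le
    have hcube : (0:ℝ) ≤ |x| * (|x| - 1) * (|x| + 1) :=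
      mul_nonneg (mul_nonneg (abs_nonneg x) (by linarith)) (by positivity)
    have h3 : 1 ≤ |x|^3 := by nlinarith [abs_nonneg x]
    have h4 : |x| ≤ |x|^3 := by nlinarith [abs_nonneg x]
    have h5 : x^2 ≤ |x|^3 := by nlinarith [sq_abs x, abs_nonneg x]
    rw [abs_le]
    constructor <;> nlinarith [le_abs_self x, neg_abs_le x]

set_option maxHeartbeats 1000000 in
private lemma polyB (p q r E M : ℝ) (hp0 : 0 ≤ p) (hpM : p ≤ M) (hq0 : 0 ≤ q) (hqM : q ≤ M)
    (hr : 0 < r) (hE : 1 ≤ E) (hM : 1 ≤ M) :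
    12*E^2*p*r*((r^2/2)*(p^2+2*p*q) + E*((E*r^3*(3*p*q^2+p^2*q+12*p^3)) +
        ((r^2/2)*(p^2+2*p*q))*(3*E*r^2*q^2)))
      + E*((E*r^3*(3*p*q^2+p^2*q+12*p^3)) + ((r^2/2)*(p^2+2*p*q))*(3*E*r^2*q^2))
    ≤ 290*E^4*r^3*(1+r*M)^2*(p*q^2+p^3) := by
  obtain ⟨N, hNdef⟩ : ∃ N, N = p*q^2+p^3 := ⟨_, rfl⟩
  have hN : 0 ≤ N := by rw [hNdef]; positivity
  have hpq : 0 ≤ p*(p-q)^2 := by positivity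
  have hpq2 : p*q^2 ≤ N := by rw [hNdef]; nlinarith [pow_nonneg hp0 3]
  have hp3 : p^3 ≤ N := by rw [hNdef]; nlinarith [mul_nonneg hp0 (sq_nonneg q)]
  have g1 : p^2*q ≤ N := by rw [hNdef]; nlinarith
  have g2 : p^2*q^2 ≤ M*N := by
    calc p^2*q^2 = p*(p*q^2) := by ring
    _ ≤ M*N := by gcongr
  have g3 : p^4 ≤ M*N := by
    calc p^4 = p*p^3 := by ring
    _ ≤ M*N := by gcongr
  have g4 : p^3*q ≤ M*N := by
    calc p^3*q = q*p^3 := by ring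
    _ ≤ M*N := by gcongr
  have g5 : p*q^3 ≤ M*N := by
    calc p*q^3 = q*(p*q^2) := by ring
    _ ≤ M*N := by gcongr
  have hqM2 : q^2 ≤ M^2 := by nlinarith
  have g6 : p^3*q^2 ≤ M^2*N := by
    calc p^3*q^2 = q^2*p^3 := by ring
    _ ≤ M^2*N := by gcongr <;> positivity
  have g7 : p^2*q^3 ≤ M^2*N := by
    calc p^2*q^3 = q^2*(p^2*q) := by ring
    _ ≤ M^2*N := by gcongr <;> positivity
  have step : 12*E^2*p*r*((r^2/2)*(p^2+2*p*q) + E*((E*r^3*(3*p*q^2+p^2*q+12*p^3)) +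
        ((r^2/2)*(p^2+2*p*q))*(3*E*r^2*q^2)))
      + E*((E*r^3*(3*p*q^2+p^2*q+12*p^3)) + ((r^2/2)*(p^2+2*p*q))*(3*E*r^2*q^2))
      ≤ (34*E^2*r^3 + 192*E^4*r^4*M + 54*E^4*r^5*M^2 + (9/2)*E^2*r^4*M) * N := by
    linarith [mul_le_mul_of_nonneg_left hp3 (by positivity : (0:ℝ) ≤ 18*E^2*r^3),
      mul_le_mul_of_nonneg_left g1 (by positivity : (0:ℝ) ≤ 13*E^2*r^3),
      mul_le_mul_of_nonneg_left g2 (by positivity : (0:ℝ) ≤ 36*E^4*r^4),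
      mul_le_mul_of_nonneg_left g4 (by positivity : (0:ℝ) ≤ 12*E^4*r^4),
      mul_le_mul_of_nonneg_left g3 (by positivity : (0:ℝ) ≤ 144*E^4*r^4),
      mul_le_mul_of_nonneg_left g6 (by positivity : (0:ℝ) ≤ 18*E^4*r^5),
      mul_le_mul_of_nonneg_left g7 (by positivity : (0:ℝ) ≤ 36*E^4*r^5),
      mul_le_mul_of_nonneg_left hpq2 (by positivity : (0:ℝ) ≤ 3*E^2*r^3),
      mul_le_mul_of_nonneg_left g2 (by positivity : (0:ℝ) ≤ (3/2)*E^2*r^4),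
      mul_le_mul_of_nonneg_left g5 (by positivity : (0:ℝ) ≤ 3*E^2*r^4)]
  have hE2 : 1 ≤ E^2 := by nlinarith
  have hE4 : E^2 ≤ E^4 := by nlinarith [hE2, sq_nonneg E]
  have hM0 : (0:ℝ) ≤ M := by linarith
  have k1 : 34*E^2*r^3 ≤ 34*E^4*r^3 := by
    have := mul_le_mul_of_nonneg_right hE4 (by positivity : (0:ℝ) ≤ 34*r^3); linarith [this]
  have k2 : (9/2)*E^2*r^4*M ≤ (9/2)*E^4*r^4*M := by
    have := mul_le_mul_of_nonneg_right hE4 (by positivity : (0:ℝ) ≤ (9/2)*r^4*M); linarith [this]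
  have e1 : (0:ℝ) ≤ E^4*r^3 := by positivity
  have e2 : (0:ℝ) ≤ E^4*r^4*M := by positivity
  have e3 : (0:ℝ) ≤ E^4*r^5*M^2 := by positivity
  have hrhs : 290*E^4*r^3*(1+r*M)^2 = 290*(E^4*r^3) + 580*(E^4*r^4*M) + 290*(E^4*r^5*M^2) := by ring
  have hcoef : 34*E^2*r^3 + 192*E^4*r^4*M + 54*E^4*r^5*M^2 + (9/2)*E^2*r^4*M
      ≤ 290*E^4*r^3*(1+r*M)^2 := by
    rw [hrhs]; linarith [k1, k2, e1, e2, e3]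
  calc _ ≤ (34*E^2*r^3 + 192*E^4*r^4*M + 54*E^4*r^5*M^2 + (9/2)*E^2*r^4*M) * N := step
  _ ≤ 290*E^4*r^3*(1+r*M)^2 * N := mul_le_mul_of_nonneg_right hcoef hN
  _ = 290*E^4*r^3*(1+r*M)^2*(p*q^2+p^3) := by rw [← hNdef]

private lemma abs_integral_le {Ω : Type*} [MeasurableSpace Ω] (μ : Measure Ω)
    [IsProbabilityMeasure μ] (f : Ω → ℝ) {c : ℝ} (h : ∀ᵐ ω ∂μ, |f ω| ≤ c) :
    |∫ ω, f ω ∂μ| ≤ c := by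
  have := norm_integral_le_of_norm_le_const (μ := μ) (f := f) (C := c)
    (by simpa [Real.norm_eq_abs] using h)
  simpa [Real.norm_eq_abs, measure_univ] using this
private lemma absSub (a b : ℝ) : |a - b| ≤ |a| + |b| := by
  rw [sub_eq_add_neg]
  exact (abs_add_le _ _).trans (by rw [abs_neg])

private lemma logT (u : ℝ) (h : |u| ≤ 1/2) : |Real.log (1+u) - u| ≤ 2*u^2 := by
  have hun : |(-u)| < 1 := by rw [abs_neg]; linarith
  have h1 := Real.abs_log_sub_add_sum_range_le hun 1
  simp [Finset.sum_range_succ] at h1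
  have h2 : (0:ℝ) < 1 - |u| := by linarith
  have h3 : |Real.log (1+u) - u| = |-u + Real.log (1+u)| := by
    congr 1; ring
  rw [h3]
  refine h1.trans ?_
  rw [div_le_iff₀ h2]
  nlinarith [sq_nonneg u, abs_nonneg u, sq_abs u, mul_le_mul_of_nonneg_left h (sq_nonneg u)]

set_option maxHeartbeats 2000000 in
/-- Tilted exponential-moment estimate: for a bounded centred random vector `X` in `ℝ^d`,
`E[e^{⟪a₁+a₂,X⟫}] / E[e^{⟪a₂,X⟫}]
  = exp( ½ a₁ᵀ E[XXᵀ](a₁ + 2a₂) + O(‖a₁‖‖a₂‖² + ‖a₁‖³) )`,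
uniformly over compact sets of parameters. -/
theorem stmt1 {d : ℕ} {Ω : Type*} [MeasurableSpace Ω] (μ : Measure Ω) [IsProbabilityMeasure μ]
    (X : Ω → EuclideanSpace ℝ (Fin d)) (hXmeas : Measurable X)
    (r : ℝ) (hr : 0 < r) (hbdd : ∀ᵐ ω ∂μ, ‖X ω‖ ≤ r)
    (hmean : ∫ ω, X ω ∂μ = 0)
    (K : Set (EuclideanSpace ℝ (Fin d))) (hK : IsCompact K) :
    ∃ C > 0, ∀ a₁ ∈ K, ∀ a₂ ∈ K, ∃ err : ℝ,
      |err| ≤ C * (‖a₁‖ * ‖a₂‖ ^ 2 + ‖a₁‖ ^ 3) ∧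
      (∫ ω, Real.exp ⟪a₁ + a₂, X ω⟫ ∂μ) / (∫ ω, Real.exp ⟪a₂, X ω⟫ ∂μ)
        = Real.exp ((1 / 2) * ∫ ω, ⟪a₁, X ω⟫ * (⟪a₁, X ω⟫ + 2 * ⟪a₂, X ω⟫) ∂μ + err) := by
  obtain ⟨M₀, hM₀⟩ := hK.isBounded.exists_norm_le
  obtain ⟨M, hMdef⟩ : ∃ M, M = max M₀ 1 := ⟨_, rfl⟩
  have hM1 : (1:ℝ) ≤ M := hMdef ▸ le_max_right _ _
  have hM0 : (0:ℝ) ≤ M := by linarith only [hM1]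
  obtain ⟨E, hEdef⟩ : ∃ E, E = Real.exp (M*r) := ⟨_, rfl⟩
  have hE1 : (1:ℝ) ≤ E := hEdef ▸ Real.one_le_exp (by positivity)
  have hE0 : (0:ℝ) ≤ E := by linarith only [hE1]
  refine ⟨5184*E^6*r^4*M*(1+M*r) + 290*E^4*r^3*(1+r*M)^2, by positivity, ?_⟩
  intro a₁ ha₁ a₂ ha₂
  obtain ⟨p, hpdef⟩ : ∃ p, p = ‖a₁‖ := ⟨_, rfl⟩
  obtain ⟨q, hqdef⟩ : ∃ q, q = ‖a₂‖ := ⟨_, rfl⟩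
  have hp0 : 0 ≤ p := hpdef ▸ norm_nonneg _
  have hq0 : 0 ≤ q := hqdef ▸ norm_nonneg _
  have hpM : p ≤ M := by rw [hpdef, hMdef]; exact le_trans (hM₀ a₁ ha₁) (le_max_left _ _)
  have hqM : q ≤ M := by rw [hqdef, hMdef]; exact le_trans (hM₀ a₂ ha₂) (le_max_left _ _)
  -- basic integrability
  have hXint : Integrable X μ :=
    (integrable_const r).mono' hXmeas.aestronglyMeasurable (hbdd.mono fun ω h => h)
  have bddInt : ∀ (f : Ω → ℝ), Measurable f → ∀ c : ℝ, (∀ᵐ ω ∂μ, |f ω| ≤ c) → Integrable f μ :=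
    fun f hf c h => (integrable_const c).mono' hf.aestronglyMeasurable
      (by simpa [Real.norm_eq_abs] using h)
  have hsm : Measurable (fun ω => ⟪a₁, X ω⟫) := hXmeas.const_inner
  have htm : Measurable (fun ω => ⟪a₂, X ω⟫) := hXmeas.const_inner
  have hstm : Measurable (fun ω => ⟪a₁ + a₂, X ω⟫) := hXmeas.const_inner
  -- pointwise bounds
  have hs_bd : ∀ᵐ ω ∂μ, |⟪a₁, X ω⟫| ≤ p*r := by
    filter_upwards [hbdd] with ω h
    calc |⟪a₁, X ω⟫| ≤ ‖a₁‖ * ‖X ω‖ := abs_real_inner_le_norm _ _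
    _ ≤ p * r := by rw [hpdef]; exact mul_le_mul_of_nonneg_left h (norm_nonneg _)
  have ht_bd : ∀ᵐ ω ∂μ, |⟪a₂, X ω⟫| ≤ q*r := by
    filter_upwards [hbdd] with ω h
    calc |⟪a₂, X ω⟫| ≤ ‖a₂‖ * ‖X ω‖ := abs_real_inner_le_norm _ _
    _ ≤ q * r := by rw [hqdef]; exact mul_le_mul_of_nonneg_left h (norm_nonneg _)
  have hst_bd : ∀ᵐ ω ∂μ, |⟪a₁ + a₂, X ω⟫| ≤ (p+q)*r := by
    filter_upwards [hbdd] with ω h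
    calc |⟪a₁ + a₂, X ω⟫| ≤ ‖a₁ + a₂‖ * ‖X ω‖ := abs_real_inner_le_norm _ _
    _ ≤ (‖a₁‖ + ‖a₂‖) * r :=
      mul_le_mul (norm_add_le _ _) h (norm_nonneg _) (by positivity)
    _ = (p+q)*r := by rw [hpdef, hqdef]
  have hext : ∀ᵐ ω ∂μ, Real.exp |⟪a₂, X ω⟫| ≤ E := by
    filter_upwards [ht_bd] with ω h
    rw [hEdef]
    exact Real.exp_le_exp.2 (h.trans (mul_le_mul_of_nonneg_right hqM hr.le))
  -- integrable functions
  have hint_exp_st : Integrable (fun ω => Real.exp ⟪a₁ + a₂, X ω⟫) μ := by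
    refine bddInt _ (Real.measurable_exp.comp hstm) (Real.exp ((p+q)*r)) ?_
    filter_upwards [hst_bd] with ω h
    rw [abs_of_pos (Real.exp_pos _)]
    exact Real.exp_le_exp.2 (le_trans (le_abs_self _) h)
  have hint_exp_t : Integrable (fun ω => Real.exp ⟪a₂, X ω⟫) μ := by
    refine bddInt _ (Real.measurable_exp.comp htm) (Real.exp (q*r)) ?_
    filter_upwards [ht_bd] with ω h
    rw [abs_of_pos (Real.exp_pos _)]
    exact Real.exp_le_exp.2 (le_trans (le_abs_self _) h)
  have hint_s : Integrable (fun ω => ⟪a₁, X ω⟫) μ := bddInt _ hsm (p*r) hs_bd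
  have hint_t : Integrable (fun ω => ⟪a₂, X ω⟫) μ := bddInt _ htm (q*r) ht_bd
  have hint_Q : Integrable (fun ω => ⟪a₁, X ω⟫ * (⟪a₁, X ω⟫ + 2*⟪a₂, X ω⟫)) μ := by
    refine bddInt _ (hsm.mul (hsm.add (htm.const_mul 2))) ((p*r)*((p*r)+2*(q*r))) ?_
    filter_upwards [hs_bd, ht_bd] with ω h1 h2
    rw [abs_mul]
    refine mul_le_mul h1 ?_ (abs_nonneg _) (by positivity)
    calc |⟪a₁, X ω⟫ + 2*⟪a₂, X ω⟫| ≤ |⟪a₁, X ω⟫| + |2*⟪a₂, X ω⟫| := abs_add_le _ _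
    _ = |⟪a₁, X ω⟫| + 2*|⟪a₂, X ω⟫| := by rw [abs_mul]; norm_num
    _ ≤ p*r + 2*(q*r) := by linarith only [h1, h2]
  -- zero means
  have hs0 : ∫ ω, ⟪a₁, X ω⟫ ∂μ = 0 := by rw [integral_inner hXint, hmean, inner_zero_right]
  have ht0 : ∫ ω, ⟪a₂, X ω⟫ ∂μ = 0 := by rw [integral_inner hXint, hmean, inner_zero_right]
  -- abbreviations
  set m12 := ∫ ω, Real.exp ⟪a₁ + a₂, X ω⟫ ∂μ with hm12def
  set m2 := ∫ ω, Real.exp ⟪a₂, X ω⟫ ∂μ with hm2def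
  set Q := (1/2) * ∫ ω, ⟪a₁, X ω⟫ * (⟪a₁, X ω⟫ + 2*⟪a₂, X ω⟫) ∂μ with hQdef
  -- positivity of exponential moments
  have hm12low : Real.exp (-((p+q)*r)) ≤ m12 := by
    rw [hm12def]
    have h0 : ∫ (_ : Ω), Real.exp (-((p+q)*r)) ∂μ = Real.exp (-((p+q)*r)) := by
      simp [measure_univ]
    rw [← h0]
    refine integral_mono_ae (integrable_const _) hint_exp_st ?_
    filter_upwards [hst_bd] with ω h
    exact Real.exp_le_exp.2 (by linarith only [h, neg_abs_le (⟪a₁ + a₂, X ω⟫ : ℝ)])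
  have hm2low : Real.exp (-(q*r)) ≤ m2 := by
    rw [hm2def]
    have h0 : ∫ (_ : Ω), Real.exp (-(q*r)) ∂μ = Real.exp (-(q*r)) := by
      simp [measure_univ]
    rw [← h0]
    refine integral_mono_ae (integrable_const _) hint_exp_t ?_
    filter_upwards [ht_bd] with ω h
    exact Real.exp_le_exp.2 (by linarith only [h, neg_abs_le (⟪a₂, X ω⟫ : ℝ)])
  have hm12pos : 0 < m12 := lt_of_lt_of_le (Real.exp_pos _) hm12low
  have hm2pos : 0 < m2 := lt_of_lt_of_le (Real.exp_pos _) hm2low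
  have hm12up : m12 ≤ Real.exp ((p+q)*r) := by
    refine le_trans (le_abs_self _) (abs_integral_le μ _ ?_)
    filter_upwards [hst_bd] with ω h
    rw [abs_of_pos (Real.exp_pos _)]
    exact Real.exp_le_exp.2 (le_trans (le_abs_self _) h)
  have hm2up : m2 ≤ Real.exp (q*r) := by
    refine le_trans (le_abs_self _) (abs_integral_le μ _ ?_)
    filter_upwards [ht_bd] with ω h
    rw [abs_of_pos (Real.exp_pos _)]
    exact Real.exp_le_exp.2 (le_trans (le_abs_self _) h)
  -- bound on Q
  have hQbd : |Q| ≤ (r^2/2)*(p^2+2*p*q) := by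
    rw [hQdef, abs_mul]
    have h1 : |∫ ω, ⟪a₁, X ω⟫ * (⟪a₁, X ω⟫ + 2*⟪a₂, X ω⟫) ∂μ| ≤ (p*r)*((p*r)+2*(q*r)) := by
      refine abs_integral_le μ _ ?_
      filter_upwards [hs_bd, ht_bd] with ω h1 h2
      rw [abs_mul]
      refine mul_le_mul h1 ?_ (abs_nonneg _) (by positivity)
      calc |⟪a₁, X ω⟫ + 2*⟪a₂, X ω⟫| ≤ |⟪a₁, X ω⟫| + |2*⟪a₂, X ω⟫| := abs_add_le _ _
      _ = |⟪a₁, X ω⟫| + 2*|⟪a₂, X ω⟫| := by rw [abs_mul]; norm_num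
      _ ≤ p*r + 2*(q*r) := by linarith only [h1, h2]
    calc |(1:ℝ)/2| * |∫ ω, ⟪a₁, X ω⟫ * (⟪a₁, X ω⟫ + 2*⟪a₂, X ω⟫) ∂μ|
        ≤ (1/2) * ((p*r)*((p*r)+2*(q*r))) := by
          rw [abs_of_pos (by norm_num : (0:ℝ) < (1:ℝ)/2)]
          exact mul_le_mul_of_nonneg_left h1 (by norm_num)
    _ = (r^2/2)*(p^2+2*p*q) := by ring
  refine ⟨Real.log (m12/m2) - Q, ?_, ?_⟩
  swap
  · have hQL : Q + (Real.log (m12/m2) - Q) = Real.log (m12/m2) := by ring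
    rw [hQL, Real.exp_log (div_pos hm12pos hm2pos)]
  -- the error bound
  rw [← hpdef, ← hqdef]
  rcases le_or_gt (12*E^2*r*p) 1 with hsmall | hlarge
  · -- SMALL CASE
    have h12E : (1:ℝ) ≤ 12*E^2 := by nlinarith [hE1]
    have hpr1 : p*r ≤ 1 := by
      have h' := mul_le_mul_of_nonneg_right h12E (mul_nonneg hp0 hr.le)
      linarith only [h', hsmall]
    have hexp1 : Real.exp 1 ≤ 3 := by linarith only [Real.exp_one_lt_d9]
    have hexs : ∀ᵐ ω ∂μ, Real.exp |⟪a₁, X ω⟫| ≤ 3 := by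
      filter_upwards [hs_bd] with ω h
      calc Real.exp |⟪a₁, X ω⟫| ≤ Real.exp 1 := Real.exp_le_exp.2 (h.trans hpr1)
      _ ≤ 3 := hexp1
    obtain ⟨W, hWdef⟩ : ∃ W, W = E*r^3*(3*p*q^2+p^2*q+12*p^3) := ⟨_, rfl⟩
    obtain ⟨V, hVdef⟩ : ∃ V, V = (r^2/2)*(p^2+2*p*q) := ⟨_, rfl⟩
    obtain ⟨Z, hZdef⟩ : ∃ Z, Z = 3*E*r^2*q^2 := ⟨_, rfl⟩
    have hV0 : 0 ≤ V := by rw [hVdef]; positivity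
    have hW0 : 0 ≤ W := by rw [hWdef]; positivity
    have hZ0 : 0 ≤ Z := by rw [hZdef]; positivity
    have hQV : |Q| ≤ V := by rw [hVdef]; exact hQbd
    -- step 1 : |m12 - m2 - Q| ≤ W
    have hval3 : ∫ ω, (Real.exp ⟪a₁ + a₂, X ω⟫ - Real.exp ⟪a₂, X ω⟫) ∂μ = m12 - m2 :=
      integral_sub (f := fun ω => Real.exp ⟪a₁ + a₂, X ω⟫) (g := fun ω => Real.exp ⟪a₂, X ω⟫)
        hint_exp_st hint_exp_t
    have eA : ∫ ω, (Real.exp ⟪a₁ + a₂, X ω⟫ - Real.exp ⟪a₂, X ω⟫ - ⟪a₁, X ω⟫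
        - (1/2)*(⟪a₁, X ω⟫ * (⟪a₁, X ω⟫ + 2*⟪a₂, X ω⟫))) ∂μ
        = (∫ ω, (Real.exp ⟪a₁ + a₂, X ω⟫ - Real.exp ⟪a₂, X ω⟫ - ⟪a₁, X ω⟫) ∂μ)
          - ∫ ω, (1/2)*(⟪a₁, X ω⟫ * (⟪a₁, X ω⟫ + 2*⟪a₂, X ω⟫)) ∂μ :=
      integral_sub
        (f := fun ω => Real.exp ⟪a₁ + a₂, X ω⟫ - Real.exp ⟪a₂, X ω⟫ - ⟪a₁, X ω⟫)
        (g := fun ω => (1/2)*(⟪a₁, X ω⟫ * (⟪a₁, X ω⟫ + 2*⟪a₂, X ω⟫)))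
        ((hint_exp_st.sub hint_exp_t).sub hint_s) (hint_Q.const_mul (1/2))
    have eB : ∫ ω, (Real.exp ⟪a₁ + a₂, X ω⟫ - Real.exp ⟪a₂, X ω⟫ - ⟪a₁, X ω⟫) ∂μ
        = (∫ ω, (Real.exp ⟪a₁ + a₂, X ω⟫ - Real.exp ⟪a₂, X ω⟫) ∂μ) - ∫ ω, ⟪a₁, X ω⟫ ∂μ :=
      integral_sub
        (f := fun ω => Real.exp ⟪a₁ + a₂, X ω⟫ - Real.exp ⟪a₂, X ω⟫)
        (g := fun ω => ⟪a₁, X ω⟫)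
        (hint_exp_st.sub hint_exp_t) hint_s
    have eD : ∫ ω, (1/2)*(⟪a₁, X ω⟫ * (⟪a₁, X ω⟫ + 2*⟪a₂, X ω⟫)) ∂μ = Q := by
      rw [integral_const_mul]
    have hGval : ∫ ω, (Real.exp ⟪a₁ + a₂, X ω⟫ - Real.exp ⟪a₂, X ω⟫ - ⟪a₁, X ω⟫
        - (1/2)*(⟪a₁, X ω⟫ * (⟪a₁, X ω⟫ + 2*⟪a₂, X ω⟫))) ∂μ = m12 - m2 - Q := by
      rw [eA, eB, hval3, hs0, eD]
      ring
    have hGbd : |m12 - m2 - Q| ≤ W := by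
      rw [← hGval]
      refine abs_integral_le μ _ ?_
      filter_upwards [hs_bd, ht_bd, hexs, hext] with ω hx hy hex hey
      have hxy : ⟪a₁ + a₂, X ω⟫ = ⟪a₁, X ω⟫ + ⟪a₂, X ω⟫ := inner_add_left _ _ _
      obtain ⟨x, hxdef⟩ : ∃ x, x = (⟪a₁, X ω⟫ : ℝ) := ⟨_, rfl⟩
      obtain ⟨y, hydef⟩ : ∃ y, y = (⟪a₂, X ω⟫ : ℝ) := ⟨_, rfl⟩
      rw [← hxdef] at hx hex
      rw [← hydef] at hy hey
      rw [hxy, ← hxdef, ← hydef]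
      have hid : Real.exp (x+y) - Real.exp y - x - (1/2)*(x*(x+2*y))
          = (Real.exp y - 1 - y)*x + (Real.exp y - 1)*(x^2/2)
            + Real.exp y*(Real.exp x - 1 - x - x^2/2) := by
        rw [Real.exp_add]; ring
      rw [hid]
      have hy2 : y^2 ≤ (q*r)^2 := by
        have h' := pow_le_pow_left₀ (abs_nonneg y) hy 2
        linarith only [h', sq_abs y]
      have hx2 : x^2 ≤ (p*r)^2 := by
        have h' := pow_le_pow_left₀ (abs_nonneg x) hx 2
        linarith only [h', sq_abs x]
      have hx3 : |x|^3 ≤ (p*r)^3 := pow_le_pow_left₀ (abs_nonneg x) hx 3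
      have heyy : Real.exp y ≤ E := (Real.exp_le_exp.2 (le_abs_self y)).trans hey
      have b1 : |(Real.exp y - 1 - y)*x| ≤ (3*(q*r)^2*E)*(p*r) := by
        rw [abs_mul]
        refine mul_le_mul ?_ hx (abs_nonneg _) (by positivity)
        calc |Real.exp y - 1 - y| ≤ 3*y^2*Real.exp |y| := expT2 y
        _ ≤ 3*(q*r)^2*E := by
            have h' := mul_le_mul hy2 hey (Real.exp_pos _).le (by positivity)
            linarith only [h']
      have b2 : |(Real.exp y - 1)*(x^2/2)| ≤ (2*(q*r)*E)*((p*r)^2/2) := by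
        rw [abs_mul]
        have e1 : |Real.exp y - 1| ≤ 2*(q*r)*E := by
          calc |Real.exp y - 1| ≤ 2 * |y| * Real.exp |y| := expT1 y
          _ ≤ 2*(q*r)*E := by
              have h' := mul_le_mul hy hey (Real.exp_pos _).le (by positivity)
              linarith only [h']
        have e2 : |x^2/2| ≤ (p*r)^2/2 := by
          rw [abs_of_nonneg (by positivity)]; linarith only [hx2]
        exact mul_le_mul e1 e2 (abs_nonneg _) (by positivity)
      have b3 : |Real.exp y*(Real.exp x - 1 - x - x^2/2)| ≤ E*(4*(p*r)^3*3) := by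
        rw [abs_mul, abs_of_pos (Real.exp_pos _)]
        refine mul_le_mul heyy ?_ (abs_nonneg _) hE0
        calc |Real.exp x - 1 - x - x^2/2| ≤ 4 * |x| ^ 3 * Real.exp |x| := expT3 x
        _ ≤ 4*(p*r)^3*3 := by
            have h' := mul_le_mul hx3 hex (Real.exp_pos _).le (by positivity)
            linarith only [h']
      calc |(Real.exp y - 1 - y)*x + (Real.exp y - 1)*(x^2/2)
            + Real.exp y*(Real.exp x - 1 - x - x^2/2)|
          ≤ |(Real.exp y - 1 - y)*x + (Real.exp y - 1)*(x^2/2)|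
            + |Real.exp y*(Real.exp x - 1 - x - x^2/2)| := abs_add_le _ _
      _ ≤ |(Real.exp y - 1 - y)*x| + |(Real.exp y - 1)*(x^2/2)|
            + |Real.exp y*(Real.exp x - 1 - x - x^2/2)| := by
          linarith only [abs_add_le ((Real.exp y - 1 - y)*x) ((Real.exp y - 1)*(x^2/2))]
      _ ≤ (3*(q*r)^2*E)*(p*r) + (2*(q*r)*E)*((p*r)^2/2) + E*(4*(p*r)^3*3) := by
          linarith only [b1, b2, b3]
      _ = W := by rw [hWdef]; ring
    -- step 2 : |m2 - 1| ≤ Z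
    have eE : ∫ ω, (Real.exp ⟪a₂, X ω⟫ - 1 - ⟪a₂, X ω⟫) ∂μ
        = (∫ ω, (Real.exp ⟪a₂, X ω⟫ - 1) ∂μ) - ∫ ω, ⟪a₂, X ω⟫ ∂μ :=
      integral_sub
        (f := fun ω => Real.exp ⟪a₂, X ω⟫ - 1) (g := fun ω => ⟪a₂, X ω⟫)
        (hint_exp_t.sub (integrable_const 1)) hint_t
    have eF : ∫ ω, (Real.exp ⟪a₂, X ω⟫ - 1) ∂μ
        = (∫ ω, Real.exp ⟪a₂, X ω⟫ ∂μ) - ∫ (_ : Ω), (1:ℝ) ∂μ :=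
      integral_sub (f := fun ω => Real.exp ⟪a₂, X ω⟫) (g := fun _ => (1:ℝ))
        hint_exp_t (integrable_const 1)
    have hval2 : ∫ ω, (Real.exp ⟪a₂, X ω⟫ - 1 - ⟪a₂, X ω⟫) ∂μ = m2 - 1 := by
      rw [eE, eF, ht0, integral_const, ← hm2def]
      simp [measure_univ]
    have hZb : |m2 - 1| ≤ Z := by
      rw [← hval2]
      refine abs_integral_le μ _ ?_
      filter_upwards [ht_bd, hext] with ω hy hey
      have hy2 : (⟪a₂, X ω⟫:ℝ)^2 ≤ (q*r)^2 := by
        have h' := pow_le_pow_left₀ (abs_nonneg (⟪a₂, X ω⟫:ℝ)) hy 2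
        linarith only [h', sq_abs (⟪a₂, X ω⟫:ℝ)]
      calc |Real.exp ⟪a₂, X ω⟫ - 1 - ⟪a₂, X ω⟫|
          ≤ 3*(⟪a₂, X ω⟫:ℝ)^2*Real.exp |(⟪a₂, X ω⟫:ℝ)| := expT2 _
      _ ≤ Z := by
          rw [hZdef]
          have h' := mul_le_mul hy2 hey (Real.exp_pos _).le (by positivity)
          nlinarith only [h']
    -- lower bound 1 ≤ E*m2
    have hEm2 : 1 ≤ E*m2 := by
      have h1 : Real.exp (M*r) * Real.exp (-(q*r)) = Real.exp (M*r - q*r) := by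
        rw [← Real.exp_add]; ring_nf
      have h2 : (1:ℝ) ≤ Real.exp (M*r - q*r) := Real.one_le_exp
        (by linarith only [mul_le_mul_of_nonneg_right hqM hr.le])
      calc (1:ℝ) ≤ Real.exp (M*r - q*r) := h2
      _ = Real.exp (M*r) * Real.exp (-(q*r)) := h1.symm
      _ ≤ E * m2 := by rw [hEdef]; exact mul_le_mul_of_nonneg_left hm2low (Real.exp_pos _).le
    have hdiv : ∀ a : ℝ, |a / m2| ≤ E * |a| := by
      intro a
      rw [abs_div, abs_of_pos hm2pos, div_le_iff₀ hm2pos]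
      have h' := mul_le_mul_of_nonneg_left hEm2 (abs_nonneg a)
      linarith only [h']
    -- step 4 : |m12 - m2| small
    have hD6 : |m12 - m2| ≤ 6*E*(p*r) := by
      rw [← hval3]
      refine abs_integral_le μ _ ?_
      filter_upwards [hs_bd, hexs, hext] with ω hx hex hey
      have hxy : ⟪a₁ + a₂, X ω⟫ = ⟪a₁, X ω⟫ + ⟪a₂, X ω⟫ := inner_add_left _ _ _
      obtain ⟨x, hxdef⟩ : ∃ x, x = (⟪a₁, X ω⟫ : ℝ) := ⟨_, rfl⟩
      obtain ⟨y, hydef⟩ : ∃ y, y = (⟪a₂, X ω⟫ : ℝ) := ⟨_, rfl⟩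
      rw [← hxdef] at hx hex
      rw [← hydef] at hey
      rw [hxy, ← hxdef, ← hydef]
      have hid : Real.exp (x+y) - Real.exp y = Real.exp y * (Real.exp x - 1) := by
        rw [Real.exp_add]; ring
      rw [hid, abs_mul, abs_of_pos (Real.exp_pos _)]
      have heyy : Real.exp y ≤ E := (Real.exp_le_exp.2 (le_abs_self y)).trans hey
      have e1 : |Real.exp x - 1| ≤ 2*(p*r)*3 := by
        calc |Real.exp x - 1| ≤ 2 * |x| * Real.exp |x| := expT1 x
        _ ≤ 2*(p*r)*3 := by
            have h' := mul_le_mul hx hex (Real.exp_pos _).le (by positivity)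
            linarith only [h']
      calc Real.exp y * |Real.exp x - 1| ≤ E * (2*(p*r)*3) :=
        mul_le_mul heyy e1 (abs_nonneg _) hE0
      _ = 6*E*(p*r) := by ring
    -- u and its bounds
    obtain ⟨u, hudef⟩ : ∃ u, u = m12/m2 - 1 := ⟨_, rfl⟩
    have hu_eq : u = (m12-m2)/m2 := by
      rw [hudef, sub_eq_iff_eq_add, div_add' _ _ _ hm2pos.ne', div_eq_div_iff hm2pos.ne' hm2pos.ne']
      ring
    have hu : |u| ≤ 6*E^2*(p*r) := by
      rw [hu_eq]
      calc |(m12-m2)/m2| ≤ E * |m12-m2| := hdiv _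
      _ ≤ E*(6*E*(p*r)) := mul_le_mul_of_nonneg_left hD6 hE0
      _ = 6*E^2*(p*r) := by ring
    have huhalf : |u| ≤ 1/2 := by
      refine hu.trans ?_
      linarith only [hsmall]
    have hsplit : u - Q = ((m12 - m2 - Q) - Q*(m2-1))/m2 := by
      rw [hudef, eq_div_iff hm2pos.ne']
      field_simp
      ring
    have hUQ : |u - Q| ≤ E*(W + V*Z) := by
      rw [hsplit]
      calc |((m12 - m2 - Q) - Q*(m2-1))/m2| ≤ E * |(m12 - m2 - Q) - Q*(m2-1)| := hdiv _
      _ ≤ E*(W + V*Z) := by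
          refine mul_le_mul_of_nonneg_left ?_ hE0
          calc |(m12 - m2 - Q) - Q*(m2-1)| ≤ |m12 - m2 - Q| + |Q*(m2-1)| := absSub _ _
          _ ≤ W + V*Z := by
              refine add_le_add hGbd ?_
              rw [abs_mul]
              exact mul_le_mul hQV hZb (abs_nonneg _) hV0
    have huabs : |u| ≤ V + E*(W+V*Z) := by
      have h' : Q + (u - Q) = u := by ring
      calc |u| = |Q + (u - Q)| := by rw [h']
      _ ≤ |Q| + |u - Q| := abs_add_le _ _
      _ ≤ V + E*(W+V*Z) := add_le_add hQV hUQ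
    have hu2 : u^2 ≤ 6*E^2*(p*r)*(V + E*(W+V*Z)) := by
      have h1 := mul_le_mul hu huabs (abs_nonneg u) (by positivity)
      nlinarith only [h1, sq_abs u]
    have h1u : 1 + u = m12/m2 := by rw [hudef]; ring
    have hlog : |Real.log (m12/m2) - u| ≤ 2*u^2 := by
      rw [← h1u]; exact logT u huhalf
    have hfinal : |Real.log (m12/m2) - Q| ≤ 2*u^2 + E*(W+V*Z) := by
      have h' : Real.log (m12/m2) - Q = (Real.log (m12/m2) - u) + (u - Q) := by ring
      calc |Real.log (m12/m2) - Q| = |(Real.log (m12/m2) - u) + (u - Q)| := by rw [h']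
      _ ≤ |Real.log (m12/m2) - u| + |u - Q| := abs_add_le _ _
      _ ≤ 2*u^2 + E*(W+V*Z) := add_le_add hlog hUQ
    calc |Real.log (m12/m2) - Q| ≤ 2*u^2 + E*(W+V*Z) := hfinal
    _ ≤ 12*E^2*p*r*(V + E*(W+V*Z)) + E*(W+V*Z) := by linarith only [hu2]
    _ ≤ 290*E^4*r^3*(1+r*M)^2*(p*q^2+p^3) := by
        rw [hWdef, hVdef, hZdef]
        exact polyB p q r E M hp0 hpM hq0 hqM hr hE1 hM1
    _ ≤ (5184*E^6*r^4*M*(1+M*r) + 290*E^4*r^3*(1+r*M)^2)*(p*q^2+p^3) := by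
        have h0 : (0:ℝ) ≤ 5184*E^6*r^4*M*(1+M*r)*(p*q^2+p^3) := by positivity
        linarith only [h0]
  · -- LARGE CASE
    have hlm12 : |Real.log m12| ≤ (p+q)*r := abs_le.2
      ⟨(Real.le_log_iff_exp_le hm12pos).2 hm12low, (Real.log_le_iff_le_exp hm12pos).2 hm12up⟩
    have hlm2 : |Real.log m2| ≤ q*r := abs_le.2
      ⟨(Real.le_log_iff_exp_le hm2pos).2 hm2low, (Real.log_le_iff_le_exp hm2pos).2 hm2up⟩
    have hld : Real.log (m12/m2) = Real.log m12 - Real.log m2 :=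
      Real.log_div hm12pos.ne' hm2pos.ne'
    have h1 : |Real.log (m12/m2) - Q| ≤ (p+q)*r + q*r + (r^2/2)*(p^2+2*p*q) := by
      rw [hld, abs_le]
      obtain ⟨e1, e2⟩ := abs_le.1 hlm12
      obtain ⟨e3, e4⟩ := abs_le.1 hlm2
      obtain ⟨e5, e6⟩ := abs_le.1 hQbd
      constructor <;> linarith only [e1, e2, e3, e4, e5, e6]
    have h12 : (1:ℝ) ≤ 12*E^2*r*p := hlarge.le
    have hsq : (1:ℝ) ≤ (12*E^2*r*p)^2 := by nlinarith only [h12]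
    have hone3 : (1:ℝ) ≤ (12*E^2*r*p)^3 := by nlinarith only [h12, hsq]
    have hb1 : (p+2*q)*r ≤ 3*M*r := by
      have h' : p+2*q ≤ 3*M := by linarith only [hpM, hqM]
      exact mul_le_mul_of_nonneg_right h' hr.le
    have hb2 : (r^2/2)*(p^2+2*p*q) ≤ (3/2)*M^2*r^2 := by
      have h' : p^2+2*p*q ≤ 3*M^2 := by
        nlinarith only [hpM, hqM, hp0, hq0, hM0]
      calc (r^2/2)*(p^2+2*p*q) ≤ (r^2/2)*(3*M^2) :=
        mul_le_mul_of_nonneg_left h' (by positivity)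
      _ = (3/2)*M^2*r^2 := by ring
    calc |Real.log (m12/m2) - Q| ≤ (p+q)*r + q*r + (r^2/2)*(p^2+2*p*q) := h1
    _ ≤ 3*M*r*(1+M*r) := by linarith only [hb1, hb2, sq_nonneg (M*r)]
    _ ≤ 3*M*r*(1+M*r) * (12*E^2*r*p)^3 := le_mul_of_one_le_right (by positivity) hone3
    _ = 5184*E^6*r^4*M*(1+M*r)*p^3 := by ring
    _ ≤ 5184*E^6*r^4*M*(1+M*r)*(p*q^2+p^3) := by
        have h' : p^3 ≤ p*q^2+p^3 := by
          have := mul_nonneg hp0 (sq_nonneg q)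
          linarith only [this]
        exact mul_le_mul_of_nonneg_left h' (by positivity)
    _ ≤ (5184*E^6*r^4*M*(1+M*r) + 290*E^4*r^3*(1+r*M)^2)*(p*q^2+p^3) := by
        have h0 : (0:ℝ) ≤ 290*E^4*r^3*(1+r*M)^2*(p*q^2+p^3) := by positivity
        linarith only [h0]
end

section
/- Let η, η_a be as above (η compactly supported in B(0,r), η_a the tilt by e^{⟨a,x⟩}). Then there exists a coupling (U, U_a) with U ∼ η and U_a ∼ η_a such that E[|U_a − U|] ≤ C|a| and E[|U_a − U|^2] ≤ C|a| for some constant C depending only on η and r, for all sufficiently small |a|. -/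
open MeasureTheory RealInnerProductSpace

/-- Approximate Girsanov coupling: if `η` is a probability measure supported in the closed ball
of radius `r` and `η_a(dx) ∝ e^{⟪a,x⟫} η(dx)`, then for all sufficiently small `a` there is a
coupling `(U, U_a)` of `η` and `η_a` (formalised as a probability measure on the product with the
prescribed marginals) satisfying `E|U_a − U| ≤ C‖a‖` and `E|U_a − U|² ≤ C‖a‖`. -/
theorem stmt4 {d : ℕ} (η : Measure (EuclideanSpace ℝ (Fin d))) [IsProbabilityMeasure η]
    (r : ℝ) (hr : 0 < r) (hsupp : η (Metric.closedBall 0 r)ᶜ = 0) :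
    ∃ C > 0, ∃ ε > 0, ∀ a : EuclideanSpace ℝ (Fin d), ‖a‖ ≤ ε →
      ∃ P : Measure (EuclideanSpace ℝ (Fin d) × EuclideanSpace ℝ (Fin d)),
        IsProbabilityMeasure P ∧
        P.map Prod.fst = η ∧
        P.map Prod.snd = η.withDensity (fun x =>
          ENNReal.ofReal (Real.exp ⟪a, x⟫ / ∫ v, Real.exp ⟪a, v⟫ ∂η)) ∧
        (∫ p, ‖p.2 - p.1‖ ∂P) ≤ C * ‖a‖ ∧
        (∫ p, ‖p.2 - p.1‖ ^ 2 ∂P) ≤ C * ‖a‖ := by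
  refine ⟨4 * r ^ 2 + 8 * r ^ 3, by positivity, 1, one_pos, fun a ha => ?_⟩
  have hball : ∀ᵐ x ∂η, ‖x‖ ≤ r := by
    rw [ae_iff]
    convert hsupp using 2
    ext x
    simp [Metric.mem_closedBall, dist_zero_right]
  have hcont : Continuous fun x : EuclideanSpace ℝ (Fin d) => Real.exp ⟪a, x⟫ :=
    Real.continuous_exp.comp (continuous_const.inner continuous_id)
  have hexp_bd : ∀ᵐ x ∂η, ‖Real.exp ⟪a, x⟫‖ ≤ Real.exp (‖a‖ * r) := by
    filter_upwards [hball] with x hx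
    rw [Real.norm_eq_abs, abs_of_pos (Real.exp_pos _)]
    apply Real.exp_le_exp.mpr
    calc ⟪a, x⟫ ≤ ‖a‖ * ‖x‖ := real_inner_le_norm a x
    _ ≤ ‖a‖ * r := by gcongr
  have hexp_int : Integrable (fun x => Real.exp ⟪a, x⟫) η :=
    (integrable_const _).mono' hcont.aestronglyMeasurable hexp_bd
  set Z := ∫ v, Real.exp ⟪a, v⟫ ∂η with hZdef
  have hZlb : Real.exp (-(‖a‖ * r)) ≤ Z := by
    have h0 : Real.exp (-(‖a‖ * r)) = ∫ _v, Real.exp (-(‖a‖ * r)) ∂η := by simp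
    rw [h0]
    refine integral_mono_ae (integrable_const _) hexp_int ?_
    filter_upwards [hball] with x hx
    apply Real.exp_le_exp.mpr
    have h1 : -(‖a‖ * ‖x‖) ≤ ⟪a, x⟫ := neg_le_of_abs_le (abs_real_inner_le_norm a x)
    have h2 : -(‖a‖ * r) ≤ -(‖a‖ * ‖x‖) := by
      simp only [neg_le_neg_iff]; gcongr
    linarith
  have hZub : Z ≤ Real.exp (‖a‖ * r) := by
    have h0 : Real.exp (‖a‖ * r) = ∫ _v, Real.exp (‖a‖ * r) ∂η := by simp
    rw [h0]
    refine integral_mono_ae hexp_int (integrable_const _) ?_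
    filter_upwards [hball] with x hx
    apply Real.exp_le_exp.mpr
    calc ⟪a, x⟫ ≤ ‖a‖ * ‖x‖ := real_inner_le_norm a x
    _ ≤ ‖a‖ * r := by gcongr
  have hZpos : 0 < Z := lt_of_lt_of_le (Real.exp_pos _) hZlb
  set f := fun x : EuclideanSpace ℝ (Fin d) => Real.exp ⟪a, x⟫ / Z with hfdef
  have hf_meas : Measurable f := (hcont.measurable).div_const _
  have hf_nonneg : ∀ x, 0 ≤ f x := fun x => div_nonneg (Real.exp_pos _).le hZpos.le
  have hf_int : Integrable f η := hexp_int.div_const _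
  have hf_int1 : ∫ x, f x ∂η = 1 := by
    rw [hfdef]
    simp only [integral_div, ← hZdef]
    exact div_self hZpos.ne'
  -- a.e. lower bound on f
  have hf_lb : ∀ᵐ x ∂η, Real.exp (-(2 * r * ‖a‖)) ≤ f x := by
    filter_upwards [hball] with x hx
    have h1 : Real.exp (-(‖a‖ * r)) ≤ Real.exp ⟪a, x⟫ := by
      apply Real.exp_le_exp.mpr
      have h1 : -(‖a‖ * ‖x‖) ≤ ⟪a, x⟫ := neg_le_of_abs_le (abs_real_inner_le_norm a x)
      nlinarith [norm_nonneg a]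
    have h2 : Real.exp (-(2 * r * ‖a‖)) = Real.exp (-(‖a‖ * r)) / Real.exp (‖a‖ * r) := by
      rw [← Real.exp_sub]; ring_nf
    rw [h2]
    exact div_le_div₀ (Real.exp_pos _).le h1 hZpos hZub
  set g := fun x : EuclideanSpace ℝ (Fin d) => min (f x) 1 with hgdef
  have hg_meas : Measurable g := hf_meas.min measurable_const
  have hg_nonneg : ∀ x, 0 ≤ g x := fun x => le_min (hf_nonneg x) one_pos.le
  have hg_le_one : ∀ x, g x ≤ 1 := fun x => min_le_right _ _
  have hg_le_f : ∀ x, g x ≤ f x := fun x => min_le_left _ _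
  set ηa := η.withDensity (fun x => ENNReal.ofReal (f x)) with hηadef
  set μ := η.withDensity (fun x => ENNReal.ofReal (g x)) with hμdef
  set μα := η.withDensity (fun x => ENNReal.ofReal (1 - g x)) with hαdef
  set μβ := η.withDensity (fun x => ENNReal.ofReal (f x - g x)) with hβdef
  have hμα : μ + μα = η := by
    rw [hμdef, hαdef, ← withDensity_add_right _ (show Measurable (fun x => ENNReal.ofReal (1 - g x)) from
      (measurable_const.sub hg_meas).ennreal_ofReal)]
    have : ((fun x => ENNReal.ofReal (g x)) + fun x => ENNReal.ofReal (1 - g x)) =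
        fun _ => (1 : ENNReal) := by
      funext x
      rw [Pi.add_apply, ← ENNReal.ofReal_add (hg_nonneg x) (by linarith [hg_le_one x])]
      simp
    rw [this]
    exact (withDensity_one (μ := η))
  have hμβ : μ + μβ = ηa := by
    rw [hμdef, hβdef, hηadef,
      ← withDensity_add_right _ (show Measurable (fun x => ENNReal.ofReal (f x - g x)) from
        (hf_meas.sub hg_meas).ennreal_ofReal)]
    congr 1
    funext x
    rw [Pi.add_apply, ← ENNReal.ofReal_add (hg_nonneg x) (by linarith [hg_le_f x])]
    congr 1
    ring
  have hηa_prob : IsProbabilityMeasure ηa := by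
    constructor
    rw [hηadef, withDensity_apply _ MeasurableSet.univ, Measure.restrict_univ,
      ← ofReal_integral_eq_lintegral_ofReal hf_int (Filter.Eventually.of_forall hf_nonneg),
      hf_int1]
    simp
  set t := μα Set.univ with htdef
  have hmass_α : μ Set.univ + t = 1 := by
    have := congrArg (fun ν : Measure (EuclideanSpace ℝ (Fin d)) => ν Set.univ) hμα
    simpa [Measure.add_apply] using this
  have hmass_β : μ Set.univ + μβ Set.univ = 1 := by
    have := congrArg (fun ν : Measure (EuclideanSpace ℝ (Fin d)) => ν Set.univ) hμβ
    simpa [Measure.add_apply, hηa_prob.measure_univ] using this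
  have hμ_fin : μ Set.univ ≤ 1 := le_of_le_of_eq (le_add_right le_rfl) hmass_α
  have hμ_ne_top : μ Set.univ ≠ ⊤ := (lt_of_le_of_lt hμ_fin ENNReal.one_lt_top).ne
  have ht_le : t ≤ 1 := le_of_le_of_eq (le_add_left le_rfl) hmass_α
  have ht_ne_top : t ≠ ⊤ := (lt_of_le_of_lt ht_le ENNReal.one_lt_top).ne
  have hβ_eq_t : μβ Set.univ = t := by
    have := hmass_α.trans hmass_β.symm
    exact (ENNReal.add_right_inj hμ_ne_top).mp this.symm
  haveI : IsFiniteMeasure μα := ⟨lt_of_le_of_lt ht_le ENNReal.one_lt_top⟩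
  haveI : IsFiniteMeasure μβ := ⟨by rw [hβ_eq_t]; exact lt_of_le_of_lt ht_le ENNReal.one_lt_top⟩
  haveI : IsFiniteMeasure μ := ⟨lt_of_le_of_lt hμ_fin ENNReal.one_lt_top⟩
  have hdiag_meas : Measurable fun x : EuclideanSpace ℝ (Fin d) => (x, x) :=
    measurable_id.prodMk measurable_id
  -- bound on t
  have ht_toReal : t.toReal ≤ 2 * r * ‖a‖ := by
    have hint : Integrable (fun x => 1 - g x) η := by
      refine (integrable_const (1:ℝ)).mono' ((measurable_const.sub hg_meas).aestronglyMeasurable) ?_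
      refine Filter.Eventually.of_forall fun x => ?_
      rw [Real.norm_eq_abs, abs_of_nonneg (by linarith [hg_le_one x])]
      linarith [hg_nonneg x]
    have ht_eq : t = ENNReal.ofReal (∫ x, (1 - g x) ∂η) := by
      rw [htdef, hαdef, withDensity_apply _ MeasurableSet.univ, Measure.restrict_univ,
        ofReal_integral_eq_lintegral_ofReal hint
          (Filter.Eventually.of_forall fun x => by
            simp only [Pi.zero_apply]; linarith [hg_le_one x])]
    rw [ht_eq, ENNReal.toReal_ofReal (integral_nonneg fun x => by
      simp only [Pi.zero_apply]; linarith [hg_le_one x])]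
    have hbd : ∀ᵐ x ∂η, 1 - g x ≤ 2 * r * ‖a‖ := by
      filter_upwards [hf_lb] with x hx
      have h1 : Real.exp (-(2 * r * ‖a‖)) ≤ g x := by
        rw [hgdef]
        exact le_min hx (Real.exp_le_one_iff.mpr (by positivity |> neg_nonpos_of_nonneg))
      have h2 : 1 - 2 * r * ‖a‖ ≤ Real.exp (-(2 * r * ‖a‖)) := by
        have := Real.add_one_le_exp (-(2 * r * ‖a‖))
        linarith
      linarith
    calc ∫ x, (1 - g x) ∂η ≤ ∫ _x, 2 * r * ‖a‖ ∂η :=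
      integral_mono_ae hint (integrable_const _) hbd
    _ = 2 * r * ‖a‖ := by simp
  rcases eq_or_ne t 0 with ht0 | ht0
  · -- degenerate case: the tilted measure equals η, use the diagonal coupling
    have hα0 : μα = 0 := Measure.measure_univ_eq_zero.mp ht0
    have hβ0 : μβ = 0 := Measure.measure_univ_eq_zero.mp (hβ_eq_t.trans ht0)
    have hμη : μ = η := by rw [← hμα, hα0, add_zero]
    have hμηa : μ = ηa := by rw [← hμβ, hβ0, add_zero]
    refine ⟨η.map (fun x => (x, x)), ?_, ?_, ?_, ?_, ?_⟩
    · exact Measure.isProbabilityMeasure_map hdiag_meas.aemeasurable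
    · rw [Measure.map_map measurable_fst hdiag_meas]
      have h1 : (Prod.fst ∘ fun x : EuclideanSpace ℝ (Fin d) => (x, x)) = id := rfl
      rw [h1, Measure.map_id]
    · show _ = ηa
      rw [Measure.map_map measurable_snd hdiag_meas]
      have h1 : (Prod.snd ∘ fun x : EuclideanSpace ℝ (Fin d) => (x, x)) = id := rfl
      rw [h1, Measure.map_id, ← hμη, hμηa]
    · have h1 : (∫ p : EuclideanSpace ℝ (Fin d) × EuclideanSpace ℝ (Fin d),
          ‖p.2 - p.1‖ ∂(η.map (fun x => (x, x)))) = 0 := by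
        rw [integral_map (f := fun p : EuclideanSpace ℝ (Fin d) × EuclideanSpace ℝ (Fin d) => ‖p.2 - p.1‖) hdiag_meas.aemeasurable
          ((continuous_snd.sub continuous_fst).norm.aestronglyMeasurable)]
        simp
      rw [h1]
      positivity
    · have h1 : (∫ p : EuclideanSpace ℝ (Fin d) × EuclideanSpace ℝ (Fin d),
          ‖p.2 - p.1‖ ^ 2 ∂(η.map (fun x => (x, x)))) = 0 := by
        rw [integral_map (f := fun p : EuclideanSpace ℝ (Fin d) × EuclideanSpace ℝ (Fin d) => ‖p.2 - p.1‖ ^ 2) hdiag_meas.aemeasurable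
          (((continuous_snd.sub continuous_fst).norm.pow 2).aestronglyMeasurable)]
        simp
      rw [h1]
      positivity
  · -- main case
    set ν := μα.prod μβ with hνdef
    set P := μ.map (fun x => (x, x)) + t⁻¹ • ν with hPdef
    have hν_univ : ν Set.univ = t * t := by
      rw [hνdef, ← Set.univ_prod_univ, Measure.prod_prod, ← htdef, hβ_eq_t]
    have hfst : P.map Prod.fst = η := by
      rw [hPdef, Measure.map_add _ _ measurable_fst, Measure.map_map measurable_fst hdiag_meas,
        Measure.map_smul, hνdef, Measure.map_fst_prod]
      have h1 : (Prod.fst ∘ fun x : EuclideanSpace ℝ (Fin d) => (x, x)) = id := rfl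
      rw [h1, Measure.map_id, hβ_eq_t, smul_smul, ENNReal.inv_mul_cancel ht0 ht_ne_top,
        one_smul, hμα]
    have hsnd : P.map Prod.snd = ηa := by
      rw [hPdef, Measure.map_add _ _ measurable_snd, Measure.map_map measurable_snd hdiag_meas,
        Measure.map_smul, hνdef, Measure.map_snd_prod]
      have h1 : (Prod.snd ∘ fun x : EuclideanSpace ℝ (Fin d) => (x, x)) = id := rfl
      rw [h1, Measure.map_id, ← htdef, smul_smul, ENNReal.inv_mul_cancel ht0 ht_ne_top,
        one_smul, hμβ]
    have hPuniv : P Set.univ = 1 := by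
      have h2 := congrArg (fun ν' : Measure (EuclideanSpace ℝ (Fin d)) => ν' Set.univ) hfst
      rwa [Measure.map_apply measurable_fst MeasurableSet.univ, Set.preimage_univ,
        measure_univ (μ := η)] at h2
    -- bad sets are null for ν
    have hnull : ∀ s : Set (EuclideanSpace ℝ (Fin d)), η s = 0 → μα s = 0 ∧ μβ s = 0 :=
      fun s hs => ⟨withDensity_absolutelyContinuous η _ hs,
        withDensity_absolutelyContinuous η _ hs⟩
    have hνball : ∀ᵐ p ∂ν, ‖p.1‖ ≤ r ∧ ‖p.2‖ ≤ r := by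
      have hb : {x : EuclideanSpace ℝ (Fin d) | ¬ ‖x‖ ≤ r} = (Metric.closedBall 0 r)ᶜ := by
        ext x; simp [Metric.mem_closedBall, dist_zero_right]
      rw [ae_iff]
      have hsub : {p : EuclideanSpace ℝ (Fin d) × EuclideanSpace ℝ (Fin d) |
          ¬(‖p.1‖ ≤ r ∧ ‖p.2‖ ≤ r)} ⊆
          ((Metric.closedBall 0 r)ᶜ ×ˢ Set.univ) ∪ (Set.univ ×ˢ (Metric.closedBall 0 r)ᶜ) := by
        intro p hp
        simp only [Set.mem_setOf_eq, not_and_or] at hp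
        rcases hp with hp | hp
        · left; exact ⟨by rw [← hb]; exact hp, Set.mem_univ _⟩
        · right; exact ⟨Set.mem_univ _, by rw [← hb]; exact hp⟩
      refine measure_mono_null hsub (measure_union_null ?_ ?_) <;>
        rw [hνdef, Measure.prod_prod]
      · rw [(hnull _ hsupp).1, zero_mul]
      · rw [(hnull _ hsupp).2, mul_zero]
    -- generic integral bound
    have main : ∀ (K : ℝ) (h : EuclideanSpace ℝ (Fin d) × EuclideanSpace ℝ (Fin d) → ℝ),
        0 ≤ K → Continuous h → (∀ p, 0 ≤ h p) → (∀ x, h (x, x) = 0) →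
        (∀ p : EuclideanSpace ℝ (Fin d) × EuclideanSpace ℝ (Fin d),
          ‖p.1‖ ≤ r → ‖p.2‖ ≤ r → h p ≤ K) →
        (∫ p, h p ∂P) ≤ K * (2 * r * ‖a‖) := by
      intro K h hK hhc hh0 hhd hhb
      have hbd : ∀ᵐ p ∂ν, h p ≤ K := by
        filter_upwards [hνball] with p hp
        exact hhb p hp.1 hp.2
      have hint : Integrable h ν := by
        refine (integrable_const K).mono' hhc.aestronglyMeasurable ?_
        filter_upwards [hbd] with p hp
        rw [Real.norm_eq_abs, abs_of_nonneg (hh0 p)]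
        exact hp
      have hIν : (∫ p, h p ∂ν) ≤ K * (t.toReal * t.toReal) := by
        calc (∫ p, h p ∂ν) ≤ ∫ _p, K ∂ν := integral_mono_ae hint (integrable_const _) hbd
        _ = (ν Set.univ).toReal * K := by rw [integral_const]; rfl
        _ = K * (t.toReal * t.toReal) := by
          rw [hν_univ, ENNReal.toReal_mul]; ring
      have hdiag_int : Integrable h (μ.map (fun x => (x, x))) := by
        refine (integrable_map_measure hhc.aestronglyMeasurable hdiag_meas.aemeasurable).mpr ?_
        have h1 : (h ∘ fun x : EuclideanSpace ℝ (Fin d) => (x, x)) = fun _ => (0 : ℝ) :=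
          funext fun x => hhd x
        rw [h1]
        exact integrable_const 0
      have hdiag_zero : (∫ p, h p ∂(μ.map (fun x => (x, x)))) = 0 := by
        rw [integral_map hdiag_meas.aemeasurable hhc.aestronglyMeasurable]
        simp [hhd]
      have htpos : 0 < t.toReal := ENNReal.toReal_pos ht0 ht_ne_top
      have hsplit : (∫ p, h p ∂P) = t.toReal⁻¹ * ∫ p, h p ∂ν := by
        rw [hPdef, integral_add_measure hdiag_int
          (hint.smul_measure (ENNReal.inv_ne_top.mpr ht0)), hdiag_zero, zero_add,
          integral_smul_measure, ENNReal.toReal_inv]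
        rfl
      rw [hsplit]
      calc t.toReal⁻¹ * ∫ p, h p ∂ν ≤ t.toReal⁻¹ * (K * (t.toReal * t.toReal)) := by
            gcongr
      _ = K * t.toReal := by field_simp
      _ ≤ K * (2 * r * ‖a‖) := by gcongr
    refine ⟨P, ⟨hPuniv⟩, hfst, hsnd, ?_, ?_⟩
    · have h1 := main (2 * r) (fun p => ‖p.2 - p.1‖) (by positivity)
        (continuous_snd.sub continuous_fst).norm (fun p => norm_nonneg _)
        (fun x => by simp) ?_
      · refine h1.trans ?_
        have h2 : 0 ≤ ‖a‖ := norm_nonneg a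
        nlinarith [mul_nonneg (mul_nonneg (mul_nonneg hr.le hr.le) hr.le) h2]
      · intro p hp1 hp2
        calc ‖p.2 - p.1‖ ≤ ‖p.2‖ + ‖p.1‖ := norm_sub_le _ _
        _ ≤ 2 * r := by linarith
    · have h1 := main (4 * r ^ 2) (fun p => ‖p.2 - p.1‖ ^ 2) (by positivity)
        ((continuous_snd.sub continuous_fst).norm.pow 2) (fun p => sq_nonneg _)
        (fun x => by simp) ?_
      · refine h1.trans ?_
        have h2 : 0 ≤ ‖a‖ := norm_nonneg a
        nlinarith [mul_nonneg (mul_nonneg (mul_nonneg hr.le hr.le) hr.le) h2,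
          mul_nonneg (mul_nonneg hr.le hr.le) h2]
      · intro p hp1 hp2
        show ‖p.2 - p.1‖ ^ 2 ≤ 4 * r ^ 2
        have h3 : ‖p.2 - p.1‖ ≤ 2 * r := by
          calc ‖p.2 - p.1‖ ≤ ‖p.2‖ + ‖p.1‖ := norm_sub_le _ _
          _ ≤ 2 * r := by linarith
        calc ‖p.2 - p.1‖ ^ 2 ≤ (2 * r) ^ 2 := pow_le_pow_left₀ (norm_nonneg _) h3 2
        _ = 4 * r ^ 2 := by ring
end

section
/- Let A, a > 0 and let g : [0, A] → R be continuous. Then lim_{δ → 0+} ∫_0^A g(v) ( 1_{{(1/(v+1) − a)/δ} < 1/(v+1)} − 1/(v+1) ) dv = 0, where {t} denotes the fractional part of t. -/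
open MeasureTheory Filter

/-- bounded measurable on an interval implies interval integrable -/
lemma aux_bdd_intervalIntegrable {f : ℝ → ℝ} (hf : Measurable f) {x y C : ℝ}
    (hC : ∀ s ∈ Set.uIoc x y, |f s| ≤ C) : IntervalIntegrable f volume x y := by
  rw [intervalIntegrable_iff]
  apply Measure.integrableOn_of_bounded (M := C) measure_Ioc_lt_top.ne
    hf.aestronglyMeasurable
  rw [Set.uIoc] at hC
  rw [ae_restrict_iff' measurableSet_Ioc]
  exact ae_of_all _ fun s hs => by simpa [Real.norm_eq_abs] using hC s hs

lemma aux_ae_ne (c : ℝ) : ∀ᵐ x : ℝ, x ≠ c := by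
  rw [ae_iff]
  simp [Set.setOf_eq_eq_singleton', not_not]

/-- integral of a step indicator over an interval -/
lemma aux_int_ind (c n : ℝ) (h1 : n ≤ c) (h2 : c ≤ n + 1) :
    ∫ s in n..(n+1), (if s < c then (1:ℝ) else 0) = c - n := by
  have hmeas : Measurable fun s : ℝ => if s < c then (1:ℝ) else 0 :=
    Measurable.ite measurableSet_Iio measurable_const measurable_const
  have ii : ∀ x y : ℝ, IntervalIntegrable (fun s => if s < c then (1:ℝ) else 0) volume x y :=
    fun x y => aux_bdd_intervalIntegrable hmeas (C := 1)
      (fun s _ => by split <;> simp)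
  rw [← intervalIntegral.integral_add_adjacent_intervals (ii n c) (ii c (n+1))]
  have e1 : ∫ s in n..c, (if s < c then (1:ℝ) else 0) = c - n := by
    have : ∫ s in n..c, (if s < c then (1:ℝ) else 0) = ∫ s in n..c, (1:ℝ) := by
      apply intervalIntegral.integral_congr_ae
      filter_upwards [aux_ae_ne c] with s hs hmem
      rw [Set.uIoc_of_le h1] at hmem
      rw [if_pos (lt_of_le_of_ne hmem.2 hs)]
    rw [this]; simp
  have e2 : ∫ s in c..(n+1), (if s < c then (1:ℝ) else 0) = 0 := by
    have : ∫ s in c..(n+1), (if s < c then (1:ℝ) else 0) = ∫ s in c..(n+1), (0:ℝ) := by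
      apply intervalIntegral.integral_congr
      intro s hs
      rw [Set.uIcc_of_le h2] at hs
      simp only [if_neg (not_lt.mpr hs.1)]
    rw [this]; simp
  rw [e1, e2]; ring

set_option maxHeartbeats 1600000 in
/-- Key estimate on a single unit interval. -/
lemma aux_key {Gc : ℝ → ℝ} (hGm : Measurable Gc) {a δ M ε₁ b : ℝ} (hδ : 0 < δ)
    (hδ2 : δ ≤ 1/2) (hb : 0 < b)
    (hM : ∀ w ∈ Set.Icc b 1, |Gc w| ≤ M)
    (hb1 : b ≤ 1)
    (hosc : ∀ x ∈ Set.Icc b 1, ∀ y ∈ Set.Icc b 1, |x - y| ≤ δ → |Gc x - Gc y| ≤ ε₁)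
    (n : ℤ) (hn1 : b ≤ δ*n + a) (hn2 : δ*(n+1) + a ≤ 1) :
    |∫ s in (n:ℝ)..((n:ℝ)+1),
        Gc (δ*s+a) * ((if Int.fract s < δ*s+a then (1:ℝ) else 0) - (δ*s+a))|
      ≤ 3*M*δ + ε₁ := by
  have h1δ : 0 < 1 - δ := by linarith
  have hε₁0 : 0 ≤ ε₁ := le_trans (abs_nonneg _)
    (hosc b ⟨le_rfl, hb1⟩ b ⟨le_rfl, hb1⟩ (by simp [hδ.le]))
  set c : ℝ := ((n:ℝ) + a) / (1 - δ) with hc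
  have hc' : c * (1 - δ) = (n:ℝ) + a := div_mul_cancel₀ _ h1δ.ne'
  have hwpos : 0 < δ*(n:ℝ) + a := lt_of_lt_of_le hb hn1
  have hcn : (n:ℝ) ≤ c := by rw [hc, le_div_iff₀ h1δ]; nlinarith
  have hcn1 : c ≤ (n:ℝ) + 1 := by rw [hc, div_le_iff₀ h1δ]; nlinarith
  -- membership facts
  have hw_mem : ∀ s : ℝ, (n:ℝ) ≤ s → s ≤ (n:ℝ)+1 → δ*s+a ∈ Set.Icc b 1 := by
    intro s hs1 hs2
    constructor
    · nlinarith
    · nlinarith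
  have hψ_bd : ∀ s : ℝ, (n:ℝ) ≤ s → s ≤ (n:ℝ)+1 →
      |(if s < c then (1:ℝ) else 0) - (δ*s+a)| ≤ 1 := by
    intro s hs1 hs2
    have := hw_mem s hs1 hs2
    rw [abs_le]
    split <;> constructor <;> [skip; skip; skip; skip] <;>
      simp only [Set.mem_Icc] at this <;> nlinarith [this.1, this.2]
  -- step 1 : rewrite fract and the condition
  have congr1 : (∫ s in (n:ℝ)..((n:ℝ)+1),
        Gc (δ*s+a) * ((if Int.fract s < δ*s+a then (1:ℝ) else 0) - (δ*s+a)))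
      = ∫ s in (n:ℝ)..((n:ℝ)+1),
        Gc (δ*s+a) * ((if s < c then (1:ℝ) else 0) - (δ*s+a)) := by
    apply intervalIntegral.integral_congr_ae
    filter_upwards [aux_ae_ne ((n:ℝ)+1)] with s hs hmem
    rw [Set.uIoc_of_le (by linarith)] at hmem
    have hs2 : s < (n:ℝ) + 1 := lt_of_le_of_ne hmem.2 hs
    have hfr : Int.fract s = s - (n:ℝ) := by
      have hfl : ⌊s⌋ = n := by
        rw [Int.floor_eq_iff]
        constructor
        · exact le_of_lt hmem.1
        · exact_mod_cast hs2
      rw [Int.fract, hfl]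
    have hiff : (Int.fract s < δ*s+a) ↔ (s < c) := by
      rw [hfr, hc, lt_div_iff₀ h1δ]
      constructor <;> intro <;> nlinarith
    rw [if_congr hiff rfl rfl]
  rw [congr1]
  -- integrability facts
  have hmH : Measurable fun s : ℝ =>
      Gc (δ*s+a) * ((if s < c then (1:ℝ) else 0) - (δ*s+a)) := by
    apply Measurable.mul
    · exact hGm.comp ((measurable_id.const_mul δ).add_const a)
    · exact (Measurable.ite measurableSet_Iio measurable_const measurable_const).sub
        ((measurable_id.const_mul δ).add_const a)
  have hmψ : Measurable fun s : ℝ => (if s < c then (1:ℝ) else 0) - (δ*s+a) :=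
    (Measurable.ite measurableSet_Iio measurable_const measurable_const).sub
      ((measurable_id.const_mul δ).add_const a)
  have uIoc_sub : Set.uIoc (n:ℝ) ((n:ℝ)+1) ⊆ Set.Icc (n:ℝ) ((n:ℝ)+1) := by
    rw [Set.uIoc_of_le (by linarith)]
    exact Set.Ioc_subset_Icc_self
  have iψ : IntervalIntegrable (fun s => (if s < c then (1:ℝ) else 0) - (δ*s+a))
      volume (n:ℝ) ((n:ℝ)+1) :=
    aux_bdd_intervalIntegrable hmψ (C := 1) fun s hs =>
      hψ_bd s (uIoc_sub hs).1 (uIoc_sub hs).2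
  have idiff : IntervalIntegrable (fun s =>
      (Gc (δ*s+a) - Gc (δ*(n:ℝ)+a)) * ((if s < c then (1:ℝ) else 0) - (δ*s+a)))
      volume (n:ℝ) ((n:ℝ)+1) := by
    apply aux_bdd_intervalIntegrable
      ((((hGm.comp ((measurable_id.const_mul δ).add_const a))).sub measurable_const).mul hmψ)
      (C := ε₁ * 1)
    intro s hs
    show |(Gc (δ*s+a) - Gc (δ*(n:ℝ)+a)) * ((if s < c then (1:ℝ) else 0) - (δ*s+a))| ≤ ε₁ * 1
    rw [abs_mul]
    apply mul_le_mul _ (hψ_bd s (uIoc_sub hs).1 (uIoc_sub hs).2) (abs_nonneg _) hε₁0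
    apply hosc _ (hw_mem s (uIoc_sub hs).1 (uIoc_sub hs).2)
      _ (hw_mem (n:ℝ) le_rfl (by linarith))
    rw [abs_of_nonneg (by nlinarith [(uIoc_sub hs).1] : (0:ℝ) ≤ δ*s+a - (δ*(n:ℝ)+a))]
    nlinarith [(uIoc_sub hs).2]
  -- splitting
  have split : (∫ s in (n:ℝ)..((n:ℝ)+1),
        Gc (δ*s+a) * ((if s < c then (1:ℝ) else 0) - (δ*s+a)))
      = (∫ s in (n:ℝ)..((n:ℝ)+1),
          (Gc (δ*s+a) - Gc (δ*(n:ℝ)+a)) * ((if s < c then (1:ℝ) else 0) - (δ*s+a)))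
        + Gc (δ*(n:ℝ)+a) * ∫ s in (n:ℝ)..((n:ℝ)+1),
            ((if s < c then (1:ℝ) else 0) - (δ*s+a)) := by
    rw [← intervalIntegral.integral_const_mul, ← intervalIntegral.integral_add idiff
      (iψ.const_mul _)]
    apply intervalIntegral.integral_congr
    intro s _
    ring
  rw [split]
  -- compute ∫ ψ
  have iInd : IntervalIntegrable (fun s => if s < c then (1:ℝ) else 0) volume (n:ℝ) ((n:ℝ)+1) :=
    aux_bdd_intervalIntegrable (Measurable.ite measurableSet_Iio measurable_const
      measurable_const) (C := 1) fun s _ => by split <;> simp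
  have iAff : IntervalIntegrable (fun s : ℝ => δ*s+a) volume (n:ℝ) ((n:ℝ)+1) :=
    Continuous.intervalIntegrable (by fun_prop) _ _
  have hψint : (∫ s in (n:ℝ)..((n:ℝ)+1), ((if s < c then (1:ℝ) else 0) - (δ*s+a)))
      = (c - n) - (δ*(((n:ℝ)+1)^2 - (n:ℝ)^2)/2 + a) := by
    rw [intervalIntegral.integral_sub iInd iAff, aux_int_ind c (n:ℝ) hcn hcn1]
    congr 1
    have i1 : IntervalIntegrable (fun s : ℝ => δ*s) volume (n:ℝ) ((n:ℝ)+1) :=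
      Continuous.intervalIntegrable (by fun_prop) _ _
    rw [intervalIntegral.integral_add i1 (intervalIntegrable_const),
      intervalIntegral.integral_const_mul, integral_id,
      intervalIntegral.integral_const]
    simp [smul_eq_mul]
    ring
  have hψval : |∫ s in (n:ℝ)..((n:ℝ)+1), ((if s < c then (1:ℝ) else 0) - (δ*s+a))| ≤ 3*δ := by
    rw [hψint, abs_le]
    constructor <;> nlinarith [hc', hcn, hcn1]
  -- assemble
  have hdiff_bd : |∫ s in (n:ℝ)..((n:ℝ)+1),
      (Gc (δ*s+a) - Gc (δ*(n:ℝ)+a)) * ((if s < c then (1:ℝ) else 0) - (δ*s+a))| ≤ ε₁ := by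
    have key : ∀ x ∈ Set.uIoc (n:ℝ) ((n:ℝ)+1),
        ‖(Gc (δ*x+a) - Gc (δ*(n:ℝ)+a)) * ((if x < c then (1:ℝ) else 0) - (δ*x+a))‖ ≤ ε₁ := by
      intro x hx
      rw [Real.norm_eq_abs, abs_mul]
      have h1 := hψ_bd x (uIoc_sub hx).1 (uIoc_sub hx).2
      have h2 : |Gc (δ*x+a) - Gc (δ*(n:ℝ)+a)| ≤ ε₁ := by
        apply hosc _ (hw_mem x (uIoc_sub hx).1 (uIoc_sub hx).2)
          _ (hw_mem (n:ℝ) le_rfl (by linarith))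
        rw [abs_of_nonneg (by nlinarith [(uIoc_sub hx).1] :
          (0:ℝ) ≤ δ*x+a - (δ*(n:ℝ)+a))]
        nlinarith [(uIoc_sub hx).2]
      nlinarith [abs_nonneg (Gc (δ*x+a) - Gc (δ*(n:ℝ)+a)),
        abs_nonneg ((if x < c then (1:ℝ) else 0) - (δ*x+a))]
    have h := intervalIntegral.norm_integral_le_of_norm_le_const key
    rw [Real.norm_eq_abs] at h
    calc |∫ s in (n:ℝ)..((n:ℝ)+1),
        (Gc (δ*s+a) - Gc (δ*(n:ℝ)+a)) * ((if s < c then (1:ℝ) else 0) - (δ*s+a))|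
        ≤ ε₁ * |(n:ℝ) + 1 - (n:ℝ)| := h
      _ = ε₁ := by simp
  have hMn : |Gc (δ*(n:ℝ)+a)| ≤ M := hM _ (hw_mem (n:ℝ) le_rfl (by linarith))
  have hM0 : 0 ≤ M := le_trans (abs_nonneg _) hMn
  calc |(∫ s in (n:ℝ)..((n:ℝ)+1),
        (Gc (δ*s+a) - Gc (δ*(n:ℝ)+a)) * ((if s < c then (1:ℝ) else 0) - (δ*s+a)))
      + Gc (δ*(n:ℝ)+a) * ∫ s in (n:ℝ)..((n:ℝ)+1), ((if s < c then (1:ℝ) else 0) - (δ*s+a))|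
      ≤ ε₁ + |Gc (δ*(n:ℝ)+a)| * |∫ s in (n:ℝ)..((n:ℝ)+1),
          ((if s < c then (1:ℝ) else 0) - (δ*s+a))| := by
        refine le_trans (abs_add_le _ _) ?_
        rw [abs_mul]
        exact add_le_add hdiff_bd le_rfl
    _ ≤ ε₁ + M * (3*δ) := by
        apply add_le_add le_rfl
        exact mul_le_mul hMn hψval (abs_nonneg _) hM0
    _ = 3*M*δ + ε₁ := by ring

set_option maxHeartbeats 3200000 in
/-- An equidistribution-type limit: for `A, a > 0` and `g` continuous on `[0, A]`,
`∫_0^A g(v) ( 1_{{(1/(v+1) − a)/δ} < 1/(v+1)} − 1/(v+1) ) dv → 0` as `δ → 0⁺`,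
where `{t}` denotes the fractional part of `t`. -/
theorem stmt9 (A a : ℝ) (hA : 0 < A) (ha : 0 < a)
    (g : ℝ → ℝ) (hg : ContinuousOn g (Set.Icc 0 A)) :
    Tendsto (fun δ : ℝ =>
        ∫ v in Set.Icc (0 : ℝ) A,
          g v * ((if Int.fract ((1 / (v + 1) - a) / δ) < 1 / (v + 1) then (1 : ℝ) else 0)
            - 1 / (v + 1)))
      (nhdsWithin 0 (Set.Ioi 0)) (nhds 0) := by
  have hA1 : (0:ℝ) < A + 1 := by linarith
  set b : ℝ := (A+1)⁻¹ with hbdef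
  have hb : 0 < b := inv_pos.mpr hA1
  have hbA : b * (A+1) = 1 := inv_mul_cancel₀ hA1.ne'
  have hb1 : b < 1 := by
    rw [hbdef]
    have h2 : (1:ℝ) < A + 1 := by linarith
    have := inv_lt_one_of_one_lt₀ h2
    exact this
  -- clamp extension of g
  set gc : ℝ → ℝ := fun v => g (min (max v 0) A) with hgcdef
  have hgc : Continuous gc := by
    apply hg.comp_continuous (by fun_prop)
    intro x
    exact ⟨le_min (le_max_right _ _) hA.le, min_le_right _ _⟩
  have hgceq : ∀ v ∈ Set.Icc (0:ℝ) A, gc v = g v := by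
    intro v hv
    rw [hgcdef]
    simp only
    rw [max_eq_left hv.1, min_eq_left hv.2]
  set Gc : ℝ → ℝ := fun w => (w^2)⁻¹ * gc (w⁻¹ - 1) with hGcdef
  have hGm : Measurable Gc :=
    ((measurable_id.pow_const 2).inv).mul (hgc.measurable.comp (measurable_inv.sub_const 1))
  have hGcont : ContinuousOn Gc (Set.Icc b 1) := by
    apply ContinuousOn.mul
    · apply ContinuousOn.inv₀ (by fun_prop)
      intro x hx
      exact pow_ne_zero _ (ne_of_gt (lt_of_lt_of_le hb hx.1))
    · apply hgc.comp_continuousOn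
      apply ContinuousOn.sub _ continuousOn_const
      exact ContinuousOn.inv₀ continuousOn_id
        (fun x hx => ne_of_gt (lt_of_lt_of_le hb hx.1))
  obtain ⟨M, hM⟩ := IsCompact.exists_bound_of_continuousOn isCompact_Icc hGcont
  have hM' : ∀ w ∈ Set.Icc b 1, |Gc w| ≤ M := fun w hw => by
    simpa [Real.norm_eq_abs] using hM w hw
  have hM0 : 0 ≤ M := le_trans (abs_nonneg _) (hM' b ⟨le_rfl, hb1.le⟩)
  have hUC := isCompact_Icc.uniformContinuousOn_of_continuous hGcont
  rw [Metric.uniformContinuousOn_iff_le] at hUC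
  rw [Metric.tendsto_nhdsWithin_nhds]
  intro ε hε
  obtain ⟨d, hd, hdprop⟩ := hUC (ε/2) (by linarith)
  refine ⟨min d (min (1/2) (min (1-b) (ε/(10*(M+1))))),
    lt_min hd (lt_min (by norm_num) (lt_min (by linarith) (by positivity))), ?_⟩
  intro δ hδmem hδd
  rw [Real.dist_eq, sub_zero] at hδd
  have hδ : 0 < δ := hδmem
  rw [abs_of_pos hδ] at hδd
  have hδd' : δ < d := lt_of_lt_of_le hδd (min_le_left _ _)
  have hδ2 : δ ≤ 1/2 :=
    le_of_lt (lt_of_lt_of_le hδd (le_trans (min_le_right _ _) (min_le_left _ _)))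
  have hδ1b : δ ≤ 1 - b :=
    le_of_lt (lt_of_lt_of_le hδd (le_trans (min_le_right _ _)
      (le_trans (min_le_right _ _) (min_le_left _ _))))
  have hδε : δ < ε/(10*(M+1)) :=
    lt_of_lt_of_le hδd (le_trans (min_le_right _ _)
      (le_trans (min_le_right _ _) (min_le_right _ _)))
  rw [Real.dist_eq, sub_zero]
  -- oscillation bound
  have hosc : ∀ x ∈ Set.Icc b 1, ∀ y ∈ Set.Icc b 1, |x - y| ≤ δ → |Gc x - Gc y| ≤ ε/2 := by
    intro x hx y hy h
    have := hdprop x hx y hy (by rw [Real.dist_eq]; exact h.trans hδd'.le)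
    rwa [Real.dist_eq] at this
  -- Step A : change of variables v = w⁻¹ - 1
  have himg : (fun w : ℝ => w⁻¹ - 1) '' Set.Icc b 1 = Set.Icc 0 A := by
    ext v
    simp only [Set.mem_image, Set.mem_Icc]
    constructor
    · rintro ⟨w, ⟨hw1, hw2⟩, rfl⟩
      have hw0 : 0 < w := lt_of_lt_of_le hb hw1
      have hwi : w * w⁻¹ = 1 := mul_inv_cancel₀ hw0.ne'
      have hwip : 0 < w⁻¹ := inv_pos.mpr hw0
      constructor
      · nlinarith [mul_nonneg hwip.le (by linarith : (0:ℝ) ≤ 1 - w)]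
      · nlinarith [mul_nonneg hwip.le (by nlinarith : (0:ℝ) ≤ w*(A+1) - 1)]
    · rintro ⟨hv1, hv2⟩
      have hv01 : (0:ℝ) < v + 1 := by linarith
      have hvi : (v+1) * (v+1)⁻¹ = 1 := mul_inv_cancel₀ hv01.ne'
      have hvip : 0 < (v+1)⁻¹ := inv_pos.mpr hv01
      refine ⟨(v+1)⁻¹, ⟨?_, ?_⟩, ?_⟩
      · nlinarith [mul_nonneg (mul_nonneg hb.le hvip.le) (by linarith : (0:ℝ) ≤ A - v)]
      · nlinarith
      · rw [inv_inv]; ring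
  have hderiv : ∀ w ∈ Set.Icc b 1,
      HasDerivWithinAt (fun w : ℝ => w⁻¹ - 1) (-(w^2)⁻¹) (Set.Icc b 1) w := fun w hw =>
    ((hasDerivAt_inv (ne_of_gt (lt_of_lt_of_le hb hw.1))).sub_const 1).hasDerivWithinAt
  have hinj : Set.InjOn (fun w : ℝ => w⁻¹ - 1) (Set.Icc b 1) := by
    intro x _ y _ h
    simp only at h
    exact inv_injective (by linarith)
  have stepA := MeasureTheory.integral_image_eq_integral_abs_deriv_smul measurableSet_Icc
    hderiv hinj (fun v => g v *
      ((if Int.fract ((1 / (v + 1) - a) / δ) < 1 / (v + 1) then (1 : ℝ) else 0) - 1 / (v + 1)))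
  rw [himg] at stepA
  rw [stepA]
  have stepA2 : (∫ w in Set.Icc b 1, |-(w^2)⁻¹| • ((fun v => g v *
        ((if Int.fract ((1 / (v + 1) - a) / δ) < 1 / (v + 1) then (1 : ℝ) else 0) - 1 / (v + 1)))
        (w⁻¹ - 1)))
      = ∫ w in Set.Icc b 1, Gc w * ((if Int.fract ((w-a)/δ) < w then (1:ℝ) else 0) - w) := by
    apply MeasureTheory.setIntegral_congr_fun measurableSet_Icc
    intro w hw
    have hw0 : 0 < w := lt_of_lt_of_le hb hw.1
    have hmem : w⁻¹ - 1 ∈ Set.Icc (0:ℝ) A := himg ▸ Set.mem_image_of_mem _ hw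
    have h1 : 1/(w⁻¹ - 1 + 1) = w := by
      rw [show w⁻¹ - 1 + 1 = w⁻¹ by ring, one_div, inv_inv]
    simp only [smul_eq_mul]
    rw [h1, abs_neg, abs_of_pos (by positivity : (0:ℝ) < (w^2)⁻¹), hGcdef]
    simp only
    rw [hgceq _ hmem]
    ring
  rw [stepA2]
  -- Step B : to interval integral
  rw [MeasureTheory.integral_Icc_eq_integral_Ioc,
    ← intervalIntegral.integral_of_le hb1.le]
  -- Step C : affine substitution w = δ s + a
  set s0 : ℝ := (b - a)/δ with hs0def
  set s1 : ℝ := (1 - a)/δ with hs1def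
  have hs0e : δ*s0+a = b := by rw [hs0def]; field_simp; ring
  have hs1e : δ*s1+a = 1 := by rw [hs1def]; field_simp; ring
  have hC : (∫ w in b..1, Gc w * ((if Int.fract ((w-a)/δ) < w then (1:ℝ) else 0) - w))
      = δ * ∫ s in s0..s1,
          Gc (δ*s+a) * ((if Int.fract s < δ*s+a then (1:ℝ) else 0) - (δ*s+a)) := by
    have hsc := intervalIntegral.smul_integral_comp_mul_add (a := s0) (b := s1)
      (f := fun w => Gc w * ((if Int.fract ((w-a)/δ) < w then (1:ℝ) else 0) - w)) δ a
    rw [hs0e, hs1e] at hsc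
    rw [← hsc, smul_eq_mul]
    congr 1
    apply intervalIntegral.integral_congr
    intro s _
    have he : (δ*s + a - a)/δ = s := by field_simp; ring
    simp only [he]
  rw [hC]
  set H : ℝ → ℝ := fun s =>
    Gc (δ*s+a) * ((if Int.fract s < δ*s+a then (1:ℝ) else 0) - (δ*s+a)) with hHdef
  have hmH : Measurable H := by
    apply Measurable.mul
    · exact hGm.comp ((measurable_id.const_mul δ).add_const a)
    · apply Measurable.sub _ ((measurable_id.const_mul δ).add_const a)
      exact Measurable.ite (measurableSet_lt measurable_fract
        ((measurable_id.const_mul δ).add_const a)) measurable_const measurable_const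
  have hs0s1 : δ * (s1 - s0) = 1 - b := by
    rw [hs0def, hs1def]
    field_simp
    ring
  have hss : s0 + 1 ≤ s1 := by
    have hdd : s1 - s0 = (1-b)/δ := by
      rw [eq_div_iff hδ.ne']
      linarith [hs0s1]
    have : (1:ℝ) ≤ (1-b)/δ := (le_div_iff₀ hδ).mpr (by linarith)
    linarith
  set m0 : ℤ := ⌈s0⌉ with hm0def
  set m1 : ℤ := ⌊s1⌋ with hm1def
  have h1 : s0 ≤ (m0:ℝ) := Int.le_ceil s0
  have h2 : (m1:ℝ) ≤ s1 := Int.floor_le s1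
  have hm0u : (m0:ℝ) < s0 + 1 := Int.ceil_lt_add_one s0
  have hm1l : s1 - 1 < (m1:ℝ) := Int.sub_one_lt_floor s1
  have h3 : m0 ≤ m1 := by
    have : (m0:ℝ) ≤ (m1:ℝ) := by
      have : s0 ≤ (m1:ℝ) := by linarith
      exact_mod_cast (Int.ceil_le.mpr (by exact_mod_cast this))
    exact_mod_cast this
  have h3' : (m0:ℝ) ≤ (m1:ℝ) := by exact_mod_cast h3
  -- bound for H on [s0, s1]
  have hwmem : ∀ s : ℝ, s0 ≤ s → s ≤ s1 → δ*s+a ∈ Set.Icc b 1 := by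
    intro s hl hr
    have p1 := mul_le_mul_of_nonneg_left hl hδ.le
    have p2 := mul_le_mul_of_nonneg_left hr hδ.le
    constructor
    · linarith [hs0e]
    · linarith [hs1e]
  have hHb : ∀ s : ℝ, s0 ≤ s → s ≤ s1 → |H s| ≤ M := by
    intro s hl hr
    have hw := hwmem s hl hr
    simp only [Set.mem_Icc] at hw
    rw [hHdef]
    simp only
    rw [abs_mul]
    have hψ : |(if Int.fract s < δ*s+a then (1:ℝ) else 0) - (δ*s+a)| ≤ 1 := by
      rw [abs_le]
      split <;> constructor <;> linarith [hw.1, hw.2, hb]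
    calc |Gc (δ*s+a)| * |(if Int.fract s < δ*s+a then (1:ℝ) else 0) - (δ*s+a)|
        ≤ M * 1 := mul_le_mul (hM' _ (by exact ⟨hw.1, hw.2⟩)) hψ (abs_nonneg _) hM0
      _ = M := mul_one M
  -- integrability
  have II : ∀ x y : ℝ, s0 ≤ x → x ≤ s1 → s0 ≤ y → y ≤ s1 →
      IntervalIntegrable H volume x y := by
    intro x y hx1 hx2 hy1 hy2
    apply aux_bdd_intervalIntegrable hmH (C := M)
    intro s hs
    rw [Set.uIoc] at hs
    have hl : s0 ≤ s := le_of_lt (lt_of_le_of_lt (le_min hx1 hy1) hs.1)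
    have hr : s ≤ s1 := le_trans hs.2 (max_le hx2 hy2)
    exact hHb s hl hr
  -- decomposition
  have htot : (∫ s in s0..s1, H s) = (∫ s in s0..(m0:ℝ), H s)
      + (∫ s in (m0:ℝ)..(m1:ℝ), H s) + (∫ s in (m1:ℝ)..s1, H s) := by
    have e1 := intervalIntegral.integral_add_adjacent_intervals
      (II s0 (m0:ℝ) le_rfl (by linarith) h1 (by linarith))
      (II (m0:ℝ) (m1:ℝ) h1 (by linarith) (by linarith) h2)
    have e2 := intervalIntegral.integral_add_adjacent_intervals
      (II s0 (m1:ℝ) le_rfl (by linarith) (by linarith) h2)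
      (II (m1:ℝ) s1 (by linarith) h2 (by linarith) le_rfl)
    rw [e1, e2]
  set N : ℕ := (m1 - m0).toNat with hNdef
  have hNcast : ((N:ℤ)) = m1 - m0 := Int.toNat_of_nonneg (by omega)
  have hNr : ((N:ℝ)) = (m1:ℝ) - (m0:ℝ) := by exact_mod_cast hNcast
  have hmid : (∫ s in (m0:ℝ)..(m1:ℝ), H s)
      = ∑ k ∈ Finset.range N, ∫ s in ((m0:ℝ)+k)..((m0:ℝ)+k+1), H s := by
    have hai : ∀ k < N, IntervalIntegrable H volume ((m0:ℝ)+k) ((m0:ℝ)+k+1) := by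
      intro k hk
      have hkN : (k:ℝ) + 1 ≤ N := by exact_mod_cast Nat.succ_le_of_lt hk
      have hk0 : (0:ℝ) ≤ (k:ℝ) := Nat.cast_nonneg k
      apply II <;> linarith [hNr, h1, h2]
    have key := intervalIntegral.sum_integral_adjacent_intervals
      (a := fun k : ℕ => (m0:ℝ) + k) (n := N) (μ := MeasureTheory.volume) (f := H) ?_
    · have e0 : (m0:ℝ) + ((0:ℕ):ℝ) = (m0:ℝ) := by norm_num
      have eN : (m0:ℝ) + ((N:ℕ):ℝ) = (m1:ℝ) := by rw [hNr]; ring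
      rw [e0, eN] at key
      rw [← key]
      refine Finset.sum_congr rfl fun k _ => ?_
      have ecast : ((m0:ℝ) + (((k+1):ℕ):ℝ)) = (m0:ℝ)+(k:ℝ)+1 := by push_cast; ring
      rw [ecast]
    · intro k hk
      have h := hai k hk
      have ecast : ((m0:ℝ) + (((k+1):ℕ):ℝ)) = (m0:ℝ)+(k:ℝ)+1 := by push_cast; ring
      rw [ecast]
      exact h
  rw [htot]
  -- per-term bound
  have hterm : ∀ k ∈ Finset.range N,
      |∫ s in ((m0:ℝ)+k)..((m0:ℝ)+k+1), H s| ≤ 3*M*δ + ε/2 := by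
    intro k hk
    rw [Finset.mem_range] at hk
    have hkN : (k:ℝ) + 1 ≤ N := by exact_mod_cast Nat.succ_le_of_lt hk
    have hk0 : (0:ℝ) ≤ k := Nat.cast_nonneg k
    have hcast : ((m0:ℝ) + k) = (((m0 + (k:ℤ)) : ℤ) : ℝ) := by push_cast; ring
    have key := aux_key (a := a) hGm hδ hδ2 hb hM' hb1.le hosc (m0 + (k:ℤ)) ?_ ?_
    · rw [hHdef]
      simp only
      rw [hcast]
      exact key
    · have hle : s0 ≤ (m0:ℝ) + k := by linarith
      have p := mul_le_mul_of_nonneg_left hle hδ.le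
      push_cast
      linarith [hs0e]
    · have hle : (m0:ℝ) + k + 1 ≤ s1 := by linarith [hNr, h2]
      have p := mul_le_mul_of_nonneg_left hle hδ.le
      push_cast
      linarith [hs1e]
  -- edge bounds
  have hedge : ∀ x y : ℝ, s0 ≤ x → x ≤ s1 → s0 ≤ y → y ≤ s1 → x ≤ y →
      |∫ s in x..y, H s| ≤ M * (y - x) := by
    intro x y hx1 hx2 hy1 hy2 hxy
    have h := intervalIntegral.norm_integral_le_of_norm_le_const (C := M) (f := H)
      (a := x) (b := y) ?_
    · rw [Real.norm_eq_abs] at h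
      refine le_trans h ?_
      rw [abs_of_nonneg (by linarith : (0:ℝ) ≤ y - x)]
    · intro z hz
      rw [Set.uIoc_of_le hxy] at hz
      rw [Real.norm_eq_abs]
      exact hHb z (le_trans hx1 (le_of_lt hz.1)) (le_trans hz.2 hy2)
  have hedge1 : |∫ s in s0..(m0:ℝ), H s| ≤ M := by
    refine le_trans (hedge s0 (m0:ℝ) le_rfl (by linarith) h1 (by linarith) h1) ?_
    have hd1 : (m0:ℝ) - s0 ≤ 1 := by linarith
    calc M * ((m0:ℝ) - s0) ≤ M * 1 := mul_le_mul_of_nonneg_left hd1 hM0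
      _ = M := mul_one M
  have hedge2 : |∫ s in (m1:ℝ)..s1, H s| ≤ M := by
    refine le_trans (hedge (m1:ℝ) s1 (by linarith) h2 (by linarith) le_rfl h2) ?_
    have hd1 : s1 - (m1:ℝ) ≤ 1 := by linarith
    calc M * (s1 - (m1:ℝ)) ≤ M * 1 := mul_le_mul_of_nonneg_left hd1 hM0
      _ = M := mul_one M
  have hmid_bd : |∫ s in (m0:ℝ)..(m1:ℝ), H s| ≤ N * (3*M*δ + ε/2) := by
    rw [hmid]
    refine le_trans (Finset.abs_sum_le_sum_abs _ _) ?_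
    refine le_trans (Finset.sum_le_sum hterm) ?_
    rw [Finset.sum_const, Finset.card_range, nsmul_eq_mul]
  -- final assembly
  have hδN : δ * N ≤ 1 - b := by
    rw [hNr]
    have hle : (m1:ℝ) - m0 ≤ s1 - s0 := by linarith
    have p := mul_le_mul_of_nonneg_left hle hδ.le
    linarith [hs0s1]
  have hδN0 : 0 ≤ δ * N := by positivity
  have habs : |(∫ s in s0..(m0:ℝ), H s) + (∫ s in (m0:ℝ)..(m1:ℝ), H s)
      + (∫ s in (m1:ℝ)..s1, H s)| ≤ 2*M + N * (3*M*δ + ε/2) := by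
    refine le_trans (abs_add_le _ _) ?_
    refine le_trans (add_le_add (abs_add_le _ _) le_rfl) ?_
    linarith [hedge1, hedge2, hmid_bd]
  rw [abs_mul, abs_of_pos hδ]
  have hy : δ * |(∫ s in s0..(m0:ℝ), H s) + (∫ s in (m0:ℝ)..(m1:ℝ), H s)
      + (∫ s in (m1:ℝ)..s1, H s)| ≤ δ * (2*M + N * (3*M*δ + ε/2)) :=
    mul_le_mul_of_nonneg_left habs hδ.le
  have hb1' : (0:ℝ) ≤ 1 - b := by linarith
  have hεd : δ * (10*(M+1)) < ε := by
    rw [lt_div_iff₀ (by positivity : (0:ℝ) < 10*(M+1))] at hδε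
    linarith [hδε]
  have hexp : δ * (2*M + N * (3*M*δ + ε/2))
      = 2*M*δ + (δ*N)*(3*M*δ) + (δ*N)*(ε/2) := by ring
  have hb2 : (δ*N)*(3*M*δ) ≤ 1*(3*M*δ) :=
    mul_le_mul_of_nonneg_right (by linarith) (by positivity)
  have hb3 : (δ*N)*(ε/2) ≤ 1*(ε/2) :=
    mul_le_mul_of_nonneg_right (by linarith) (by positivity)
  linarith [hy, hexp, hb2, hb3, hεd, hM0, hδ.le, mul_nonneg hM0 hδ.le]
end

section
/- Let ν be a finite Borel measure on [0,1] and for m ∈ N define Q_m = Σ_{j=0}^{2^m−1} ν([j 2^{−m}, (j+1) 2^{−m}])^2. Then ν is non-atomic if and only if lim_{m→∞} Q_m = 0. -/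
open MeasureTheory Filter Metric

/-- Uniform smallness of measures of short intervals for a non-atomic finite measure. -/
lemma stmt16_aux (ν : Measure ℝ) [IsFiniteMeasure ν] (hna : ∀ x : ℝ, ν {x} = 0)
    {ε : ℝ} (hε : 0 < ε) :
    ∃ δ > 0, ∀ a b : ℝ, a ∈ Set.Icc (0 : ℝ) 1 → b - a < δ →
      ν (Set.Icc a b) < ENNReal.ofReal ε := by
  have hofε : (0 : ENNReal) < ENNReal.ofReal ε := ENNReal.ofReal_pos.mpr hε
  -- for each x choose an open set of small measure containing x
  have hU : ∀ x : ℝ, ∃ U : Set ℝ, x ∈ U ∧ IsOpen U ∧ ν U < ENNReal.ofReal ε := by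
    intro x
    obtain ⟨U, hxU, hUo, hUm⟩ := Set.exists_isOpen_lt_of_lt {x} (ENNReal.ofReal ε)
      (by rw [hna x]; exact hofε)
    exact ⟨U, hxU rfl, hUo, hUm⟩
  choose U hxU hUo hUm using hU
  obtain ⟨δ, hδ, hball⟩ := lebesgue_number_lemma_of_metric (isCompact_Icc (a := (0:ℝ)) (b := 1))
    hUo (fun x _ => Set.mem_iUnion.mpr ⟨x, hxU x⟩)
  refine ⟨δ, hδ, fun a b ha hab => ?_⟩
  obtain ⟨i, hi⟩ := hball a ha
  have hsub : Set.Icc a b ⊆ U i := by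
    refine Set.Subset.trans ?_ hi
    intro y hy
    rw [mem_ball, Real.dist_eq, abs_of_nonneg (by linarith [hy.1])]
    linarith [hy.2]
  exact lt_of_le_of_lt (measure_mono hsub) (hUm i)

/-- Characterisation of non-atomicity via dyadic square sums: for a finite Borel measure `ν`
on `[0,1]`, setting `Q_m = Σ_{j<2^m} ν([j2^{−m},(j+1)2^{−m}])²`, one has `ν` non-atomic iff
`Q_m → 0` as `m → ∞`. -/
theorem stmt16 (ν : Measure ℝ) [IsFiniteMeasure ν]
    (hsupp : ν (Set.Icc (0 : ℝ) 1)ᶜ = 0) :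
    (∀ x : ℝ, ν {x} = 0) ↔
      Tendsto (fun m : ℕ =>
          ∑ j ∈ Finset.range (2 ^ m),
            ((ν (Set.Icc ((j : ℝ) / 2 ^ m) ((j + 1 : ℝ) / 2 ^ m))).toReal) ^ 2)
        atTop (nhds 0) := by
  constructor
  · -- non-atomic ⇒ Q_m → 0
    intro hna
    rw [Metric.tendsto_atTop]
    intro ε hε
    set T : ℝ := (ν Set.univ).toReal with hT
    have hT0 : 0 ≤ T := ENNReal.toReal_nonneg
    set ε' : ℝ := ε / (T + 1) with hε'
    have hε'pos : 0 < ε' := div_pos hε (by linarith)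
    obtain ⟨δ, hδ, hsmall⟩ := stmt16_aux ν hna hε'pos
    -- find N with (1/2)^m < δ for m ≥ N
    have htend : Tendsto (fun m : ℕ => ((1:ℝ)/2) ^ m) atTop (nhds 0) :=
      tendsto_pow_atTop_nhds_zero_of_lt_one (by norm_num) (by norm_num)
    obtain ⟨N, hN⟩ := (Metric.tendsto_atTop.mp htend) δ hδ
    refine ⟨N, fun m hm => ?_⟩
    have hpow : ((1:ℝ)/2) ^ m < δ := by
      have := hN m hm
      rwa [Real.dist_eq, sub_zero, abs_of_nonneg (by positivity)] at this
    have h2m : (0:ℝ) < 2 ^ m := by positivity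
    -- abbreviation for terms
    set t : ℕ → ℝ := fun j => (ν (Set.Icc ((j : ℝ) / 2 ^ m) ((j + 1 : ℝ) / 2 ^ m))).toReal with ht
    have htn : ∀ j, 0 ≤ t j := fun j => ENNReal.toReal_nonneg
    have htle : ∀ j ∈ Finset.range (2 ^ m), t j < ε' := by
      intro j hj
      rw [Finset.mem_range] at hj
      apply ENNReal.toReal_lt_of_lt_ofReal
      apply hsmall
      · constructor
        · positivity
        · rw [div_le_one h2m]
          exact_mod_cast hj.le
      · have heq : ((j:ℝ) + 1) / 2 ^ m - (j:ℝ) / 2 ^ m = ((1:ℝ)/2) ^ m := by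
          rw [div_sub_div_same, one_div, inv_pow]
          norm_num
        rw [heq]; exact hpow
    -- sum of the t j is at most T
    have hsum_le : ∑ j ∈ Finset.range (2 ^ m), t j ≤ T := by
      have hIccIco : ∀ j : ℕ, ν (Set.Icc ((j : ℝ) / 2 ^ m) ((j + 1 : ℝ) / 2 ^ m))
          = ν (Set.Ico ((j : ℝ) / 2 ^ m) ((j + 1 : ℝ) / 2 ^ m)) := by
        intro j
        have hle : ((j : ℝ) / 2 ^ m) ≤ ((j + 1 : ℝ) / 2 ^ m) := by
          gcongr
          linarith
        rw [← Set.Ico_union_right hle]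
        apply le_antisymm
        · calc ν (Set.Ico ((j : ℝ) / 2 ^ m) ((j + 1 : ℝ) / 2 ^ m) ∪ {((j:ℝ) + 1) / 2 ^ m})
              ≤ ν (Set.Ico ((j : ℝ) / 2 ^ m) ((j + 1 : ℝ) / 2 ^ m)) + ν {((j:ℝ) + 1) / 2 ^ m} :=
              measure_union_le _ _
            _ = ν (Set.Ico ((j : ℝ) / 2 ^ m) ((j + 1 : ℝ) / 2 ^ m)) := by rw [hna]; simp
        · exact measure_mono Set.subset_union_left
      have hdisj : (↑(Finset.range (2 ^ m)) : Set ℕ).PairwiseDisjoint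
          (fun j : ℕ => Set.Ico ((j : ℝ) / 2 ^ m) ((j + 1 : ℝ) / 2 ^ m)) := by
        intro i _ j _ hij
        rcases hij.lt_or_gt with h | h
        · rw [Function.onFun, Set.Ico_disjoint_Ico]
          refine le_trans (min_le_left _ _) (le_trans ?_ (le_max_right _ _))
          gcongr
          exact_mod_cast h
        · rw [Function.onFun, Set.Ico_disjoint_Ico]
          refine le_trans (min_le_right _ _) (le_trans ?_ (le_max_left _ _))
          gcongr
          exact_mod_cast h
      have hmeas : ∀ j ∈ Finset.range (2 ^ m),
          MeasurableSet (Set.Ico ((j : ℝ) / 2 ^ m) ((j + 1 : ℝ) / 2 ^ m)) :=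
        fun j _ => measurableSet_Ico
      have := measure_biUnion_finset hdisj hmeas (μ := ν)
      have hsum : ∑ j ∈ Finset.range (2 ^ m),
          ν (Set.Icc ((j : ℝ) / 2 ^ m) ((j + 1 : ℝ) / 2 ^ m)) ≤ ν Set.univ := by
        calc ∑ j ∈ Finset.range (2 ^ m),
            ν (Set.Icc ((j : ℝ) / 2 ^ m) ((j + 1 : ℝ) / 2 ^ m))
            = ∑ j ∈ Finset.range (2 ^ m),
            ν (Set.Ico ((j : ℝ) / 2 ^ m) ((j + 1 : ℝ) / 2 ^ m)) := by
              exact Finset.sum_congr rfl fun j _ => hIccIco j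
          _ = ν (⋃ j ∈ Finset.range (2 ^ m), Set.Ico ((j : ℝ) / 2 ^ m) ((j + 1 : ℝ) / 2 ^ m)) :=
              this.symm
          _ ≤ ν Set.univ := measure_mono (Set.subset_univ _)
      have hfin : ∀ j ∈ Finset.range (2 ^ m),
          ν (Set.Icc ((j : ℝ) / 2 ^ m) ((j + 1 : ℝ) / 2 ^ m)) ≠ ⊤ :=
        fun j _ => measure_ne_top ν _
      calc ∑ j ∈ Finset.range (2 ^ m), t j
          = (∑ j ∈ Finset.range (2 ^ m),
            ν (Set.Icc ((j : ℝ) / 2 ^ m) ((j + 1 : ℝ) / 2 ^ m))).toReal :=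
            (ENNReal.toReal_sum hfin).symm
        _ ≤ T := ENNReal.toReal_mono (measure_ne_top ν _) hsum
    -- conclude
    have hQ : ∑ j ∈ Finset.range (2 ^ m), t j ^ 2 ≤ ε' * ∑ j ∈ Finset.range (2 ^ m), t j := by
      rw [Finset.mul_sum]
      apply Finset.sum_le_sum
      intro j hj
      rw [sq]
      exact mul_le_mul_of_nonneg_right (htle j hj).le (htn j)
    have hfinal : ∑ j ∈ Finset.range (2 ^ m), t j ^ 2 < ε := by
      calc ∑ j ∈ Finset.range (2 ^ m), t j ^ 2
          ≤ ε' * ∑ j ∈ Finset.range (2 ^ m), t j := hQ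
        _ ≤ ε' * T := mul_le_mul_of_nonneg_left hsum_le hε'pos.le
        _ < ε' * (T + 1) := by nlinarith
        _ = ε := by rw [hε']; exact div_mul_cancel₀ ε (by linarith)
    rw [Real.dist_eq, sub_zero, abs_of_nonneg (Finset.sum_nonneg fun j _ => sq_nonneg _)]
    exact hfinal
  · -- Q_m → 0 ⇒ non-atomic
    intro htend x
    by_cases hx : x ∈ Set.Icc (0 : ℝ) 1
    · set c : ℝ := (ν {x}).toReal with hc
      have hkey : ∀ m : ℕ, c ^ 2 ≤ ∑ j ∈ Finset.range (2 ^ m),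
          ((ν (Set.Icc ((j : ℝ) / 2 ^ m) ((j + 1 : ℝ) / 2 ^ m))).toReal) ^ 2 := by
        intro m
        have h2m : (0:ℝ) < 2 ^ m := by positivity
        set j : ℕ := min ⌊x * 2 ^ m⌋₊ (2 ^ m - 1) with hj
        have hjlt : j < 2 ^ m := by
          have : 2 ^ m - 1 < 2 ^ m := Nat.sub_lt (pow_pos (by norm_num) m) one_pos
          exact lt_of_le_of_lt (min_le_right _ _) this
        have hxmem : x ∈ Set.Icc ((j : ℝ) / 2 ^ m) ((j + 1 : ℝ) / 2 ^ m) := by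
          constructor
          · rw [div_le_iff₀ h2m]
            have h1 : j ≤ ⌊x * 2 ^ m⌋₊ := min_le_left _ _
            calc (j : ℝ) ≤ (⌊x * 2 ^ m⌋₊ : ℝ) := Nat.cast_le.mpr h1
              _ ≤ x * 2 ^ m := Nat.floor_le (by nlinarith [hx.1])
          · rw [le_div_iff₀ h2m]
            rcases le_or_gt (⌊x * 2 ^ m⌋₊) (2 ^ m - 1) with h | h
            · have : j = ⌊x * 2 ^ m⌋₊ := min_eq_left h
              rw [this]
              exact (Nat.lt_floor_add_one (x * 2 ^ m)).le
            · have : j = 2 ^ m - 1 := min_eq_right h.le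
              rw [this]
              have : ((2 ^ m - 1 : ℕ) : ℝ) + 1 = 2 ^ m := by
                have : (1:ℕ) ≤ 2 ^ m := Nat.one_le_two_pow
                push_cast [this]
                ring
              rw [this]
              nlinarith [hx.2]
        have hterm : c ^ 2 ≤
            ((ν (Set.Icc ((j : ℝ) / 2 ^ m) ((j + 1 : ℝ) / 2 ^ m))).toReal) ^ 2 := by
          apply pow_le_pow_left₀ ENNReal.toReal_nonneg
          exact ENNReal.toReal_mono (measure_ne_top ν _)
            (measure_mono (Set.singleton_subset_iff.mpr hxmem))
        exact le_trans hterm (Finset.single_le_sum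
          (f := fun j : ℕ => ((ν (Set.Icc ((j : ℝ) / 2 ^ m) ((j + 1 : ℝ) / 2 ^ m))).toReal) ^ 2)
          (fun i _ => sq_nonneg _) (Finset.mem_range.mpr hjlt))
      have hle : c ^ 2 ≤ 0 := ge_of_tendsto' htend hkey
      have hc0 : c = 0 := by nlinarith [sq_nonneg c]
      rcases (ENNReal.toReal_eq_zero_iff _).mp hc0 with h | h
      · exact h
      · exact absurd h (measure_ne_top ν _)
    · exact measure_mono_null (Set.singleton_subset_iff.mpr hx) hsupp
end

section
/- Let θ ∈ C and let g : N → C satisfy: π_g(t) := Σ_{p ≤ t, p prime} g(p) = θ t/log t + E_g(t) with E_g(t) = o(t/log t) and ∫_2^∞ |E_g(t)| t^{−2} dt < ∞. Then Σ_{p > y} g(p) cos(s log p) / p^{1 + 1/log y} = O(1) uniformly in y ≥ 3 and s in any compact subset of R; moreover for s = 0 the limit as y → ∞ equals θ ∫_1^∞ e^{−u} du/u. -/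
open MeasureTheory Filter

/-- Partial sums of the prime tail `Σ_{y < p ≤ T} g(p) cos(s log p) / p^{1 + 1/log y}`. -/
noncomputable def primeTailSum (g : ℕ → ℂ) (y s : ℝ) (T : ℕ) : ℂ :=
  ∑ p ∈ Finset.filter (fun p : ℕ => p.Prime ∧ y < (p : ℝ)) (Finset.range (T + 1)),
    g p * ((Real.cos (s * Real.log p) / (p : ℝ) ^ (1 + 1 / Real.log y) : ℝ) : ℂ)



noncomputable def phiR (s δ t : ℝ) : ℝ := Real.cos (s * Real.log t) * t ^ (-(1+δ))
noncomputable def phiR' (s δ t : ℝ) : ℝ :=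
  (-Real.sin (s * Real.log t) * (s / t)) * t ^ (-(1+δ))
    + Real.cos (s * Real.log t) * (-(1+δ) * t ^ (-(1+δ) - 1))
noncomputable def fC (s δ : ℝ) (t : ℝ) : ℂ := ((phiR s δ t : ℝ) : ℂ)

lemma hasDerivAt_phiR {t : ℝ} (ht : 0 < t) (s δ : ℝ) :
    HasDerivAt (phiR s δ) (phiR' s δ t) t := by
  have h1 : HasDerivAt (fun t : ℝ => Real.cos (s * Real.log t))
      (-Real.sin (s * Real.log t) * (s * (1/t))) t := by
    have := ((Real.hasDerivAt_log ht.ne').const_mul s).cos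
    simpa [mul_comm, one_div] using this
  have h2 : HasDerivAt (fun t : ℝ => t ^ (-(1+δ)))
      (-(1+δ) * t ^ (-(1+δ) - 1)) t :=
    Real.hasDerivAt_rpow_const (Or.inl ht.ne')
  have := h1.mul h2
  refine HasDerivAt.congr_deriv (f := phiR s δ) this ?_
  simp only [phiR']
  ring

lemma hasDerivAt_fC {t : ℝ} (ht : 0 < t) (s δ : ℝ) :
    HasDerivAt (fC s δ) ((phiR' s δ t : ℝ) : ℂ) t :=
  (hasDerivAt_phiR ht s δ).ofReal_comp

lemma deriv_fC {t : ℝ} (ht : 0 < t) (s δ : ℝ) :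
    deriv (fC s δ) t = ((phiR' s δ t : ℝ) : ℂ) := (hasDerivAt_fC ht s δ).deriv

lemma rpow_split {t δ : ℝ} (ht : 0 < t) : t ^ (-2-δ) = (1/t) * t ^ (-(1+δ)) := by
  rw [one_div, ← Real.rpow_neg_one t, ← Real.rpow_add ht]
  ring_nf

lemma phiR'_bound {t δ : ℝ} (ht : 1 ≤ t) (hδ0 : 0 ≤ δ) (hδ1 : δ ≤ 1) (s : ℝ) :
    |phiR' s δ t| ≤ (|s| + 2) * t ^ (-2-δ) := by
  have ht0 : (0:ℝ) < t := lt_of_lt_of_le one_pos ht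
  have key : t ^ (-(1+δ) - 1) = t ^ (-2-δ) := by ring_nf
  have hpos : (0:ℝ) < t ^ (-2-δ) := Real.rpow_pos_of_pos ht0 _
  have hppos : (0:ℝ) < t ^ (-(1+δ)) := Real.rpow_pos_of_pos ht0 _
  have hA : |(-Real.sin (s * Real.log t) * (s / t)) * t ^ (-(1+δ))| ≤ |s| * t ^ (-2-δ) := by
    rw [abs_mul, abs_mul, abs_of_pos hppos, rpow_split ht0, abs_neg]
    have h1 : |Real.sin (s * Real.log t)| ≤ 1 := Real.abs_sin_le_one _
    have h2 : |s / t| ≤ |s| * (1/t) := by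
      rw [abs_div, abs_of_pos ht0, div_eq_mul_one_div]
    calc |Real.sin (s * Real.log t)| * |s / t| * t ^ (-(1+δ))
        ≤ 1 * (|s| * (1/t)) * t ^ (-(1+δ)) := by gcongr
      _ = |s| * ((1/t) * t ^ (-(1+δ))) := by ring
  have hB : |Real.cos (s * Real.log t) * (-(1+δ) * t ^ (-(1+δ) - 1))| ≤ 2 * t ^ (-2-δ) := by
    rw [abs_mul, abs_mul, key, abs_of_pos hpos, abs_neg, abs_of_nonneg (show (0:ℝ) ≤ 1+δ by linarith)]
    have h1 : |Real.cos (s * Real.log t)| ≤ 1 := Real.abs_cos_le_one _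
    calc |Real.cos (s * Real.log t)| * ((1+δ) * t ^ (-2-δ))
        ≤ 1 * ((1+δ) * t ^ (-2-δ)) := by gcongr
      _ ≤ 2 * t ^ (-2-δ) := by nlinarith
  calc |phiR' s δ t| ≤ _ + _ := abs_add_le _ _
    _ ≤ |s| * t ^ (-2-δ) + 2 * t ^ (-2-δ) := add_le_add hA hB
    _ = (|s| + 2) * t ^ (-2-δ) := by ring

lemma phiR'_zero {t δ : ℝ} : phiR' 0 δ t = -(1+δ) * t ^ (-(1+δ) - 1) := by
  simp [phiR']

lemma phiR_zero {t δ : ℝ} : phiR 0 δ t = t ^ (-(1+δ)) := by simp [phiR]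


noncomputable def aP (g : ℕ → ℂ) (n : ℕ) : ℂ := if n.Prime then g n else 0
noncomputable def Sc (g : ℕ → ℂ) (t : ℝ) : ℂ := ∑ k ∈ Finset.Icc 0 ⌊t⌋₊, aP g k

lemma Sc_eq_filter (g : ℕ → ℂ) (t : ℝ) :
    Sc g t = ∑ p ∈ Finset.filter Nat.Prime (Finset.range (⌊t⌋₊ + 1)), g p := by
  rw [Sc, Finset.sum_filter, ← Finset.Ico_add_one_right_eq_Icc, Nat.Ico_zero_eq_range]
  rfl

lemma Sc_measurable (g : ℕ → ℂ) : Measurable (Sc g) := by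
  have : Sc g = (fun n : ℕ => ∑ k ∈ Finset.Icc 0 n, aP g k) ∘ Nat.floor := rfl
  rw [this]
  exact measurable_from_nat.comp Nat.measurable_floor

lemma primeTailSum_eq (g : ℕ → ℂ) {y : ℝ} (hy : 3 ≤ y) (s : ℝ) (T : ℕ) :
    primeTailSum g y s T
      = ∑ k ∈ Finset.Ioc ⌊y⌋₊ ⌊((T:ℕ):ℝ)⌋₊, fC s (1 / Real.log y) ↑k * aP g k := by
  have hy0 : (0:ℝ) ≤ y := by linarith
  rw [Nat.floor_natCast]
  rw [show (∑ k ∈ Finset.Ioc ⌊y⌋₊ T, fC s (1 / Real.log y) ↑k * aP g k)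
      = ∑ k ∈ (Finset.Ioc ⌊y⌋₊ T).filter Nat.Prime, fC s (1 / Real.log y) ↑k * g k by
    rw [Finset.sum_filter]
    refine Finset.sum_congr rfl fun k _ => ?_
    by_cases h : k.Prime <;> simp [aP, h]]
  have hset : Finset.filter (fun p : ℕ => p.Prime ∧ y < (p : ℝ)) (Finset.range (T + 1))
      = (Finset.Ioc ⌊y⌋₊ T).filter Nat.Prime := by
    ext k
    simp only [Finset.mem_filter, Finset.mem_range, Finset.mem_Ioc, Nat.lt_succ_iff,
      Nat.floor_lt hy0]
    tauto
  rw [primeTailSum, hset]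
  refine Finset.sum_congr rfl fun k hk => ?_
  obtain ⟨hk1, hk2⟩ := Finset.mem_filter.mp hk
  have hkpos : (0:ℝ) < k := by exact_mod_cast hk2.pos
  rw [fC, phiR, Real.rpow_neg hkpos.le, mul_comm]
  norm_num [div_eq_mul_inv]


lemma log_three_gt_one : (1:ℝ) < Real.log 3 := by
  rw [Real.lt_log_iff_exp_lt (by norm_num : (0:ℝ) < 3)]
  calc Real.exp 1 < 2.7182818286 := Real.exp_one_lt_d9
    _ < 3 := by norm_num

lemma exists_M {θ : ℂ} {g : ℕ → ℂ} {Eg : ℝ → ℂ}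
    (hasymp : ∀ t : ℝ, 2 ≤ t → Sc g t = θ * t / (Real.log t : ℝ) + Eg t)
    (hsmall : Asymptotics.IsLittleO Filter.atTop Eg (fun t => t / Real.log t)) :
    ∃ M : ℝ, 0 ≤ M ∧ ∀ t : ℝ, 3 ≤ t → ‖Eg t‖ ≤ M + t / Real.log t := by
  obtain ⟨t₀, ht₀⟩ := eventually_atTop.mp (hsmall.def one_pos)
  set t₁ : ℝ := max t₀ 3 with ht₁def
  refine ⟨(∑ k ∈ Finset.Icc 0 ⌈t₁⌉₊, ‖aP g k‖) + ‖θ‖ * t₁, by positivity, fun t ht => ?_⟩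
  have hlt : (1:ℝ) ≤ Real.log t := by
    have := lt_of_lt_of_le log_three_gt_one (Real.log_le_log (by norm_num) ht)
    linarith
  have ht0 : (0:ℝ) < t := by linarith
  have hq : 0 ≤ t / Real.log t := by positivity
  by_cases hc : t₁ ≤ t
  · have h1 := ht₀ t (le_trans (le_max_left _ _) hc)
    rw [one_mul, Real.norm_eq_abs, abs_of_nonneg hq] at h1
    have : (0:ℝ) ≤ (∑ k ∈ Finset.Icc 0 ⌈t₁⌉₊, ‖aP g k‖) + ‖θ‖ * t₁ := by positivity
    linarith
  · push_neg at hc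
    have hEt : Eg t = Sc g t - θ * t / (Real.log t : ℝ) := by
      rw [hasymp t (by linarith)]; ring
    have h1 : ‖Sc g t‖ ≤ ∑ k ∈ Finset.Icc 0 ⌈t₁⌉₊, ‖aP g k‖ := by
      refine le_trans (norm_sum_le _ _) ?_
      refine Finset.sum_le_sum_of_subset_of_nonneg ?_ (fun k _ _ => norm_nonneg _)
      refine Finset.Icc_subset_Icc le_rfl ?_
      have : t ≤ (⌈t₁⌉₊ : ℝ) := le_trans hc.le (Nat.le_ceil _)
      exact Nat.floor_le_of_le this
    have h2 : ‖θ * t / (Real.log t : ℝ)‖ ≤ ‖θ‖ * t₁ := by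
      rw [norm_div, norm_mul]
      simp only [Complex.norm_real, Real.norm_eq_abs]
      rw [abs_of_pos ht0, abs_of_pos (by linarith : (0:ℝ) < Real.log t)]
      calc ‖θ‖ * t / Real.log t ≤ ‖θ‖ * t / 1 := by
            apply div_le_div_of_nonneg_left ?_ one_pos hlt
            positivity
        _ = ‖θ‖ * t := by rw [div_one]
        _ ≤ ‖θ‖ * t₁ := by nlinarith [norm_nonneg θ]
    calc ‖Eg t‖ = ‖Sc g t - θ * t / (Real.log t : ℝ)‖ := by rw [hEt]
      _ ≤ ‖Sc g t‖ + ‖θ * t / (Real.log t : ℝ)‖ := norm_sub_le _ _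
      _ ≤ (∑ k ∈ Finset.Icc 0 ⌈t₁⌉₊, ‖aP g k‖) + ‖θ‖ * t₁ := add_le_add h1 h2
      _ ≤ _ := by linarith

lemma subst_integral {y : ℝ} (hy : 3 ≤ y) :
    ∫ t in Set.Ioi y, t ^ (-1 - 1/Real.log y) / Real.log t
      = ∫ u in Set.Ioi (1:ℝ), Real.exp (-u) / u := by
  have hy0 : (0:ℝ) < y := by linarith
  have hL : (1:ℝ) < Real.log y :=
    lt_of_lt_of_le log_three_gt_one (Real.log_le_log (by norm_num) hy)
  have hL0 : (0:ℝ) < Real.log y := by linarith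
  set L := Real.log y with hLdef
  set φ : ℝ → ℝ := fun u => Real.exp (L * u) with hφdef
  have hφd : ∀ u ∈ Set.Ioi (1:ℝ), HasDerivWithinAt φ (L * Real.exp (L * u)) (Set.Ioi 1) u := by
    intro u _
    have h : HasDerivAt (fun x => Real.exp (L * x)) (Real.exp (L * u) * L) u := by
      simpa using ((hasDerivAt_id u).const_mul L).exp
    simpa [hφdef, mul_comm] using h.hasDerivWithinAt
  have hinj : Set.InjOn φ (Set.Ioi 1) := by
    intro u hu v hv huv
    have := Real.exp_injective huv
    exact mul_left_cancel₀ hL0.ne' this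
  have himg : φ '' Set.Ioi 1 = Set.Ioi y := by
    ext t
    constructor
    · rintro ⟨u, hu, rfl⟩
      rw [Set.mem_Ioi] at hu ⊢
      calc y = Real.exp (L * 1) := by rw [mul_one, hLdef, Real.exp_log hy0]
        _ < Real.exp (L * u) := Real.exp_lt_exp.mpr (by nlinarith)
    · intro ht
      rw [Set.mem_Ioi] at ht
      have ht0 : (0:ℝ) < t := by linarith
      refine ⟨Real.log t / L, ?_, ?_⟩
      · rw [Set.mem_Ioi, lt_div_iff₀ hL0, one_mul]
        exact Real.log_lt_log hy0 ht
      · simp only [hφdef]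
        rw [mul_div_cancel₀ _ hL0.ne', Real.exp_log ht0]
  have key := integral_image_eq_integral_abs_deriv_smul measurableSet_Ioi hφd hinj
    (fun t => t ^ (-1 - 1/L) / Real.log t)
  rw [himg] at key
  rw [key]
  refine setIntegral_congr_fun measurableSet_Ioi (fun u hu => ?_)
  rw [Set.mem_Ioi] at hu
  have hu0 : (0:ℝ) < u := by linarith
  have hexp : (0:ℝ) < Real.exp (L * u) := Real.exp_pos _
  have h1 : Real.exp (L * u) ^ (-1 - 1/L) = Real.exp (L * u * (-1 - 1/L)) := by
    rw [Real.rpow_def_of_pos hexp, Real.log_exp]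
  have habs : |L * Real.exp (L * u)| = L * Real.exp (L * u) := abs_of_pos (by positivity)
  have hsum : Real.exp (L * u) * Real.exp (L * u * (-1 - 1/L)) = Real.exp (-u) := by
    rw [← Real.exp_add]; congr 1; field_simp; ring
  simp only [hφdef, smul_eq_mul]
  rw [habs, h1, Real.log_exp]
  calc L * Real.exp (L * u) * (Real.exp (L * u * (-1 - 1/L)) / (L * u))
      = (Real.exp (L * u) * Real.exp (L * u * (-1 - 1/L))) / u := by
        field_simp
    _ = Real.exp (-u) / u := by rw [hsum]


lemma continuousOn_phiR' (s δ : ℝ) : ContinuousOn (phiR' s δ) (Set.Ioi 0) := by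
  have hlog : ContinuousOn Real.log (Set.Ioi 0) :=
    Real.continuousOn_log.mono fun x hx => ne_of_gt (Set.mem_Ioi.mp hx)
  have hrp : ∀ p : ℝ, ContinuousOn (fun t : ℝ => t ^ p) (Set.Ioi 0) := fun p =>
    fun x hx => (Real.continuousAt_rpow_const x p (Or.inl (ne_of_gt hx))).continuousWithinAt
  have hc1 : ContinuousOn (fun t => Real.cos (s * Real.log t)) (Set.Ioi 0) :=
    Real.continuous_cos.comp_continuousOn (hlog.const_smul s)
  have hc2 : ContinuousOn (fun t => Real.sin (s * Real.log t)) (Set.Ioi 0) :=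
    Real.continuous_sin.comp_continuousOn (hlog.const_smul s)
  exact ((hc2.neg.mul ((continuousOn_const (c := s)).div continuousOn_id
    (fun x hx => ne_of_gt hx))).mul (hrp _)).add (hc1.mul (continuousOn_const.mul (hrp _)))

/-- Master lemma: Abel summation, existence of the limit, and uniform bound. -/
lemma master {θ : ℂ} {g : ℕ → ℂ} {Eg : ℝ → ℂ}
    (hasymp : ∀ t : ℝ, 2 ≤ t → Sc g t = θ * t / (Real.log t : ℝ) + Eg t)
    {M : ℝ} (hM0 : 0 ≤ M) (hM : ∀ t : ℝ, 3 ≤ t → ‖Eg t‖ ≤ M + t / Real.log t)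
    {y : ℝ} (hy : 3 ≤ y) (s : ℝ) :
    Tendsto (fun T : ℕ => primeTailSum g y s T) atTop
      (nhds (-(fC s (1/Real.log y) y * Sc g y)
        - ∫ t in Set.Ioi y, deriv (fC s (1/Real.log y)) t * Sc g t))
    ∧ ‖-(fC s (1/Real.log y) y * Sc g y)
        - ∫ t in Set.Ioi y, deriv (fC s (1/Real.log y)) t * Sc g t‖
      ≤ (|s| + 3) * (‖θ‖ + 1 + M) := by
  have hy0 : (0:ℝ) < y := by linarith
  have hy1 : (1:ℝ) < y := by linarith
  have hlogy : (1:ℝ) < Real.log y :=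
    lt_of_lt_of_le log_three_gt_one (Real.log_le_log (by norm_num) hy)
  have hlogy0 : (0:ℝ) < Real.log y := by linarith
  set δ : ℝ := 1 / Real.log y with hδdef
  have hδ0 : 0 < δ := by positivity
  have hδ1 : δ < 1 := by
    rw [hδdef, div_lt_one hlogy0]; exact hlogy
  -- norm of Sc
  have hScn : ∀ t : ℝ, 3 ≤ t → ‖Sc g t‖ ≤ (‖θ‖ + 1) * (t / Real.log t) + M := by
    intro t ht
    have ht0 : (0:ℝ) < t := by linarith
    have hlt : (0:ℝ) < Real.log t := by
      have := lt_of_lt_of_le log_three_gt_one (Real.log_le_log (by norm_num) ht); linarith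
    have h1 : ‖θ * t / (Real.log t : ℝ)‖ = ‖θ‖ * (t / Real.log t) := by
      rw [norm_div, norm_mul]
      simp [Complex.norm_real, abs_of_pos ht0, abs_of_pos hlt, mul_div_assoc]
    calc ‖Sc g t‖ = ‖θ * t / (Real.log t : ℝ) + Eg t‖ := by rw [hasymp t (by linarith)]
      _ ≤ ‖θ * t / (Real.log t : ℝ)‖ + ‖Eg t‖ := norm_add_le _ _
      _ ≤ ‖θ‖ * (t / Real.log t) + (M + t / Real.log t) := by
          rw [h1]; exact add_le_add le_rfl (hM t ht)
      _ = (‖θ‖ + 1) * (t / Real.log t) + M := by ring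
  -- the integrand and its dominating function
  set h : ℝ → ℂ := fun t => deriv (fC s δ) t * Sc g t with hhdef
  set G : ℝ → ℝ := fun t => (|s| + 2) * ((‖θ‖ + 1) / Real.log y * t ^ (-1-δ) + M * t ^ (-2:ℝ))
    with hGdef
  have hG_int : IntegrableOn G (Set.Ioi y) := by
    refine (Integrable.add ?_ ?_).const_mul _
    · exact (integrableOn_Ioi_rpow_of_lt (by linarith) hy0).const_mul _
    · exact (integrableOn_Ioi_rpow_of_lt (by norm_num) hy0).const_mul _
  have hnorm_h : ∀ t ∈ Set.Ioi y, ‖h t‖ ≤ G t := by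
    intro t ht
    rw [Set.mem_Ioi] at ht
    have ht3 : (3:ℝ) ≤ t := by linarith
    have ht0 : (0:ℝ) < t := by linarith
    have ht1 : (1:ℝ) ≤ t := by linarith
    have hlt : Real.log y ≤ Real.log t := Real.log_le_log hy0 ht.le
    have hlt0 : (0:ℝ) < Real.log t := by linarith
    rw [hhdef]
    simp only
    rw [deriv_fC ht0, norm_mul, Complex.norm_real]
    have key1 : t ^ (-2-δ) * (t / Real.log t) ≤ t ^ (-1-δ) / Real.log y := by
      have : t ^ (-2-δ) * t = t ^ (-1-δ) := by
        rw [← Real.rpow_add_one ht0.ne' (-2-δ)]; ring_nf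
      rw [mul_div_assoc' , this]
      exact div_le_div_of_nonneg_left (Real.rpow_pos_of_pos ht0 _).le hlogy0 hlt
      -- div_le_div_of_nonneg_left : 0 ≤ a → 0 < c → c ≤ b → a / b ≤ a / c
    have key2 : t ^ (-2-δ) ≤ t ^ (-2:ℝ) :=
      Real.rpow_le_rpow_of_exponent_le ht1 (by linarith)
    calc |phiR' s δ t| * ‖Sc g t‖
        ≤ ((|s| + 2) * t ^ (-2-δ)) * ((‖θ‖ + 1) * (t / Real.log t) + M) := by
          refine mul_le_mul (phiR'_bound ht1 hδ0.le hδ1.le s) (hScn t ht3) (norm_nonneg _) ?_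
          positivity
      _ = (|s| + 2) * ((‖θ‖ + 1) * (t ^ (-2-δ) * (t / Real.log t)) + M * t ^ (-2-δ)) := by ring
      _ ≤ G t := by
          rw [hGdef]
          simp only
          have hs2 : (0:ℝ) ≤ |s| + 2 := by positivity
          refine mul_le_mul_of_nonneg_left (add_le_add ?_ ?_) hs2
          · calc (‖θ‖ + 1) * (t ^ (-2-δ) * (t / Real.log t))
                ≤ (‖θ‖ + 1) * (t ^ (-1-δ) / Real.log y) :=
                  mul_le_mul_of_nonneg_left key1 (by positivity)
              _ = (‖θ‖ + 1) / Real.log y * t ^ (-1-δ) := by ring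
          · exact mul_le_mul_of_nonneg_left key2 hM0
  have h_meas : AEStronglyMeasurable h (volume.restrict (Set.Ioi y)) :=
    ((measurable_deriv (fC s δ)).aestronglyMeasurable.mul
      (Sc_measurable g).aestronglyMeasurable).restrict
  have hh_int : IntegrableOn h (Set.Ioi y) := by
    refine Integrable.mono' hG_int h_meas ?_
    exact (ae_restrict_iff' measurableSet_Ioi).mpr (Filter.Eventually.of_forall hnorm_h)
  -- bound on the integral term
  have hbound_int : ‖∫ t in Set.Ioi y, h t‖ ≤ (|s| + 2) * (‖θ‖ + 1 + M) := by
    have h1 : ‖∫ t in Set.Ioi y, h t‖ ≤ ∫ t in Set.Ioi y, G t :=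
      norm_integral_le_of_norm_le hG_int
        ((ae_restrict_iff' measurableSet_Ioi).mpr (Filter.Eventually.of_forall hnorm_h))
    have hI1 : ∫ t in Set.Ioi y, t ^ (-1-δ) = Real.exp (-1) * Real.log y := by
      rw [integral_Ioi_rpow_of_lt (by linarith) hy0,
        show (-1-δ+1) = -δ by ring, Real.rpow_def_of_pos hy0,
        show Real.log y * -δ = -1 by rw [hδdef]; field_simp, hδdef]
      field_simp
    have hI2 : ∫ t in Set.Ioi y, t ^ (-2:ℝ) = y⁻¹ := by
      rw [integral_Ioi_rpow_of_lt (by norm_num) hy0]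
      norm_num
      rw [Real.rpow_neg_one]
    have hGval : ∫ t in Set.Ioi y, G t
        = (|s| + 2) * ((‖θ‖ + 1) / Real.log y * (Real.exp (-1) * Real.log y) + M * y⁻¹) := by
      rw [hGdef]
      rw [integral_const_mul, integral_add
        ((integrableOn_Ioi_rpow_of_lt (by linarith) hy0).const_mul _)
        ((integrableOn_Ioi_rpow_of_lt (by norm_num) hy0).const_mul _),
        integral_const_mul, integral_const_mul, hI1, hI2]
    have hexp : Real.exp (-1) ≤ 1 := Real.exp_le_one_iff.mpr (by norm_num)
    have hstep : (‖θ‖ + 1) / Real.log y * (Real.exp (-1) * Real.log y)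
        = (‖θ‖ + 1) * Real.exp (-1) := by
      field_simp
    have hfin : ∫ t in Set.Ioi y, G t ≤ (|s| + 2) * (‖θ‖ + 1 + M) := by
      rw [hGval, hstep]
      have e1 : (‖θ‖ + 1) * Real.exp (-1) ≤ ‖θ‖ + 1 := by nlinarith [Real.exp_pos (-1), norm_nonneg θ]
      have e2 : M * y⁻¹ ≤ M := by
        have : y⁻¹ ≤ 1 := by rw [inv_le_one_iff₀]; right; linarith
        nlinarith
      have : (0:ℝ) ≤ |s| + 2 := by positivity
      nlinarith
    linarith
  -- bound on the boundary term
  have hfCy : ‖fC s δ y‖ ≤ y⁻¹ := by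
    rw [fC, Complex.norm_real, phiR, Real.norm_eq_abs, abs_mul]
    calc |Real.cos (s * Real.log y)| * |y ^ (-(1+δ))|
        ≤ 1 * y ^ (-(1:ℝ)) := by
          rw [abs_of_pos (Real.rpow_pos_of_pos hy0 _)]
          exact mul_le_mul (Real.abs_cos_le_one _)
            (Real.rpow_le_rpow_of_exponent_le hy1.le (by linarith))
            (Real.rpow_pos_of_pos hy0 _).le zero_le_one
      _ = y⁻¹ := by rw [one_mul, Real.rpow_neg_one]
  have hbound_b : ‖fC s δ y * Sc g y‖ ≤ ‖θ‖ + 1 + M := by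
    rw [norm_mul]
    calc ‖fC s δ y‖ * ‖Sc g y‖ ≤ y⁻¹ * ((‖θ‖ + 1) * (y / Real.log y) + M) := by
          refine mul_le_mul hfCy (hScn y hy) (norm_nonneg _) (by positivity)
      _ ≤ y⁻¹ * ((‖θ‖ + 1) * y + M) := by
          gcongr
          · exact div_le_self (by linarith) (by linarith)
      _ = (‖θ‖ + 1) + M * y⁻¹ := by field_simp
      _ ≤ (‖θ‖ + 1) + M := by
          have e2 : M * y⁻¹ ≤ M := by
            have : y⁻¹ ≤ 1 := by rw [inv_le_one_iff₀]; right; linarith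
            nlinarith
          linarith
  constructor
  · -- the limit
    have habel : ∀ᶠ T : ℕ in atTop, primeTailSum g y s T
        = fC s δ T * Sc g T - fC s δ y * Sc g y - ∫ t in Set.Ioc y (T:ℝ), h t := by
      filter_upwards [eventually_ge_atTop (⌈y⌉₊)] with T hT
      have hyT : y ≤ (T:ℝ) := le_trans (Nat.le_ceil y) (by exact_mod_cast hT)
      have hdiff : ∀ t ∈ Set.Icc y (T:ℝ), DifferentiableAt ℝ (fC s δ) t := fun t ht =>
        (hasDerivAt_fC (by have := ht.1; linarith : (0:ℝ) < t) s δ).differentiableAt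
      have hicc : IntegrableOn (deriv (fC s δ)) (Set.Icc y (T:ℝ)) := by
        have hcont : ContinuousOn (fun t => ((phiR' s δ t : ℝ) : ℂ)) (Set.Icc y (T:ℝ)) :=
          Complex.continuous_ofReal.comp_continuousOn ((continuousOn_phiR' s δ).mono
            (fun t ht => by have := ht.1; exact Set.mem_Ioi.mpr (by linarith)))
        exact (hcont.integrableOn_Icc).congr_fun
          (fun t ht => (deriv_fC (by have := ht.1; linarith : (0:ℝ) < t) s δ).symm)
          measurableSet_Icc
      rw [primeTailSum_eq g hy s T,
        sum_mul_eq_sub_sub_integral_mul (aP g) hy0.le hyT hdiff hicc]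
      rfl
    have hT1 : Tendsto (fun T : ℕ => fC s δ T * Sc g T) atTop (nhds 0) := by
      rw [tendsto_zero_iff_norm_tendsto_zero]
      have l1 : Tendsto (fun T : ℕ => ((T:ℝ)) ^ (-δ)) atTop (nhds 0) :=
        (tendsto_rpow_neg_atTop hδ0).comp tendsto_natCast_atTop_atTop
      have l2 : Tendsto (fun T : ℕ => ((T:ℝ))⁻¹) atTop (nhds 0) :=
        tendsto_inv_atTop_nhds_zero_nat
      have hb : Tendsto (fun T : ℕ => (‖θ‖ + 1) * (T:ℝ) ^ (-δ) + M * ((T:ℝ))⁻¹)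
          atTop (nhds 0) := by
        have := (l1.const_mul (‖θ‖ + 1)).add (l2.const_mul M)
        simpa using this
      refine squeeze_zero' (Filter.Eventually.of_forall fun T => norm_nonneg _) ?_ hb
      filter_upwards [eventually_ge_atTop 3] with T hT
      have hT3 : (3:ℝ) ≤ (T:ℝ) := by exact_mod_cast hT
      have hT0 : (0:ℝ) < (T:ℝ) := by linarith
      have hT1' : (1:ℝ) ≤ (T:ℝ) := by linarith
      have hlT : (1:ℝ) ≤ Real.log (T:ℝ) := by
        have := lt_of_lt_of_le log_three_gt_one (Real.log_le_log (by norm_num) hT3)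
        linarith
      have hfCT : ‖fC s δ (T:ℝ)‖ ≤ (T:ℝ) ^ (-(1+δ)) := by
        rw [fC, Complex.norm_real, phiR, Real.norm_eq_abs, abs_mul,
          abs_of_pos (Real.rpow_pos_of_pos hT0 _)]
        nlinarith [Real.abs_cos_le_one (s * Real.log (T:ℝ)),
          Real.rpow_pos_of_pos hT0 (-(1+δ)),
          abs_nonneg (Real.cos (s * Real.log (T:ℝ)))]
      rw [norm_mul]
      calc ‖fC s δ (T:ℝ)‖ * ‖Sc g (T:ℝ)‖
          ≤ (T:ℝ) ^ (-(1+δ)) * ((‖θ‖ + 1) * ((T:ℝ) / Real.log (T:ℝ)) + M) :=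
            mul_le_mul hfCT (hScn _ hT3) (norm_nonneg _) (Real.rpow_pos_of_pos hT0 _).le
        _ ≤ (‖θ‖ + 1) * (T:ℝ) ^ (-δ) + M * ((T:ℝ))⁻¹ := by
            have k1 : (T:ℝ) ^ (-(1+δ)) * (T:ℝ) = (T:ℝ) ^ (-δ) := by
              rw [← Real.rpow_add_one hT0.ne' (-(1+δ))]; ring_nf
            have k2 : (T:ℝ) ^ (-(1+δ)) ≤ ((T:ℝ))⁻¹ := by
              rw [← Real.rpow_neg_one (T:ℝ)]
              exact Real.rpow_le_rpow_of_exponent_le hT1' (by linarith)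
            have k3 : (T:ℝ) ^ (-(1+δ)) * ((T:ℝ) / Real.log (T:ℝ)) ≤ (T:ℝ) ^ (-δ) := by
              rw [mul_div_assoc', k1]
              calc (T:ℝ) ^ (-δ) / Real.log (T:ℝ) ≤ (T:ℝ) ^ (-δ) / 1 :=
                    div_le_div_of_nonneg_left (Real.rpow_pos_of_pos hT0 _).le one_pos hlT
                _ = (T:ℝ) ^ (-δ) := by rw [div_one]
            have hM' : M * (T:ℝ) ^ (-(1+δ)) ≤ M * ((T:ℝ))⁻¹ :=
              mul_le_mul_of_nonneg_left k2 hM0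
            nlinarith [norm_nonneg θ]
    have hT3' : Tendsto (fun T : ℕ => ∫ t in Set.Ioc y (T:ℝ), h t) atTop
        (nhds (∫ t in Set.Ioi y, h t)) := by
      have base := MeasureTheory.intervalIntegral_tendsto_integral_Ioi y hh_int
        tendsto_natCast_atTop_atTop
      refine base.congr' ?_
      filter_upwards [eventually_ge_atTop (⌈y⌉₊)] with T hT
      have hyT : y ≤ (T:ℝ) := le_trans (Nat.le_ceil y) (by exact_mod_cast hT)
      rw [intervalIntegral.integral_of_le hyT]
    have hcomb := (hT1.sub (tendsto_const_nhds (x := fC s δ y * Sc g y))).sub hT3'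
    rw [zero_sub] at hcomb
    exact Tendsto.congr' (habel.mono fun T hT => hT.symm) hcomb
  · -- the bound
    calc ‖-(fC s δ y * Sc g y) - ∫ t in Set.Ioi y, h t‖
        ≤ ‖-(fC s δ y * Sc g y)‖ + ‖∫ t in Set.Ioi y, h t‖ := norm_sub_le _ _
      _ ≤ (‖θ‖ + 1 + M) + (|s| + 2) * (‖θ‖ + 1 + M) := by
          rw [norm_neg]; exact add_le_add hbound_b hbound_int
      _ = (|s| + 3) * (‖θ‖ + 1 + M) := by ring


lemma phiR'_zero_abs {t δ : ℝ} (ht : 1 ≤ t) (hδ0 : 0 ≤ δ) (hδ1 : δ ≤ 1) :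
    |phiR' 0 δ t| ≤ 2 / t^2 := by
  have ht0 : (0:ℝ) < t := by linarith
  rw [phiR'_zero, abs_mul, abs_neg, abs_of_nonneg (by linarith : (0:ℝ) ≤ 1+δ),
    abs_of_pos (Real.rpow_pos_of_pos ht0 _)]
  have h1 : t ^ (-(1+δ) - 1) ≤ t ^ (-2:ℝ) :=
    Real.rpow_le_rpow_of_exponent_le ht (by linarith)
  have h2 : t ^ (-2:ℝ) = 1 / t^2 := by
    rw [show (-2:ℝ) = -(2:ℕ) by norm_num, Real.rpow_neg ht0.le, Real.rpow_natCast]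
    norm_num
  calc (1+δ) * t ^ (-(1+δ)-1) ≤ 2 * t ^ (-2:ℝ) := by
        refine mul_le_mul (by linarith) h1 (Real.rpow_pos_of_pos ht0 _).le (by norm_num)
    _ = 2 / t^2 := by rw [h2]; ring

/-- Tail of an integrable function tends to zero. -/
lemma tail_tendsto_zero {w : ℝ → ℝ} (hw : IntegrableOn w (Set.Ici 2)) :
    Tendsto (fun y : ℝ => ∫ t in Set.Ioi y, w t) atTop (nhds 0) := by
  have hw' : IntegrableOn w (Set.Ioi 2) := hw.mono_set Set.Ioi_subset_Ici_self
  have hbase : Tendsto (fun y : ℝ => ∫ t in (2:ℝ)..y, w t) atTop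
      (nhds (∫ t in Set.Ioi 2, w t)) :=
    intervalIntegral_tendsto_integral_Ioi 2 hw' tendsto_id
  have hsplit : ∀ᶠ y : ℝ in atTop, (∫ t in Set.Ioi y, w t)
      = (∫ t in Set.Ioi 2, w t) - ∫ t in (2:ℝ)..y, w t := by
    filter_upwards [eventually_ge_atTop (2:ℝ)] with y hy
    rw [intervalIntegral.integral_of_le hy]
    have hunion : Set.Ioc 2 y ∪ Set.Ioi y = Set.Ioi (2:ℝ) := Set.Ioc_union_Ioi_eq_Ioi hy
    have hdisj : Disjoint (Set.Ioc 2 y) (Set.Ioi y) := by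
      refine Set.disjoint_left.mpr fun t ht ht' => ?_
      exact absurd ht.2 (not_le.mpr ht')
    have := setIntegral_union hdisj measurableSet_Ioi
      (hw'.mono_set (by rw [← hunion]; exact Set.subset_union_left))
      (hw'.mono_set (by rw [← hunion]; exact Set.subset_union_right))
    rw [hunion] at this
    rw [this]; ring
  have : Tendsto (fun y : ℝ => (∫ t in Set.Ioi 2, w t) - ∫ t in (2:ℝ)..y, w t) atTop
      (nhds ((∫ t in Set.Ioi 2, w t) - ∫ t in Set.Ioi 2, w t)) :=
    tendsto_const_nhds.sub hbase
  rw [sub_self] at this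
  exact Tendsto.congr' (hsplit.mono fun y hy => hy.symm) this

lemma F_tendsto {θ : ℂ} {g : ℕ → ℂ} {Eg : ℝ → ℂ}
    (hasymp : ∀ t : ℝ, 2 ≤ t → Sc g t = θ * t / (Real.log t : ℝ) + Eg t)
    {M : ℝ} (hM0 : 0 ≤ M) (hM : ∀ t : ℝ, 3 ≤ t → ‖Eg t‖ ≤ M + t / Real.log t)
    (hint : IntegrableOn (fun t => ‖Eg t‖ / t ^ 2) (Set.Ici 2)) :
    Tendsto (fun y : ℝ => -(fC 0 (1/Real.log y) y * Sc g y)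
      - ∫ t in Set.Ioi y, deriv (fC 0 (1/Real.log y)) t * Sc g t) atTop
      (nhds (θ * ((∫ u in Set.Ioi (1:ℝ), Real.exp (-u) / u : ℝ) : ℂ))) := by
  set I : ℝ := ∫ u in Set.Ioi (1:ℝ), Real.exp (-u) / u with hIdef
  set u1 : ℝ → ℂ := fun y => fC 0 (1/Real.log y) y * Sc g y with hu1
  set u2 : ℝ → ℂ := fun y => θ * (((-(1 + 1/Real.log y)) * I : ℝ) : ℂ) with hu2
  set u3 : ℝ → ℂ := fun y =>
    ∫ t in Set.Ioi y, ((phiR' 0 (1/Real.log y) t : ℝ) : ℂ) * Eg t with hu3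
  -- norms of Sc
  have hScn : ∀ t : ℝ, 3 ≤ t → ‖Sc g t‖ ≤ (‖θ‖ + 1) * (t / Real.log t) + M := by
    intro t ht
    have ht0 : (0:ℝ) < t := by linarith
    have hlt : (0:ℝ) < Real.log t := by
      have := lt_of_lt_of_le log_three_gt_one (Real.log_le_log (by norm_num) ht); linarith
    have h1 : ‖θ * t / (Real.log t : ℝ)‖ = ‖θ‖ * (t / Real.log t) := by
      rw [norm_div, norm_mul]
      simp [Complex.norm_real, abs_of_pos ht0, abs_of_pos hlt, mul_div_assoc]
    calc ‖Sc g t‖ = ‖θ * t / (Real.log t : ℝ) + Eg t‖ := by rw [hasymp t (by linarith)]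
      _ ≤ ‖θ * t / (Real.log t : ℝ)‖ + ‖Eg t‖ := norm_add_le _ _
      _ ≤ ‖θ‖ * (t / Real.log t) + (M + t / Real.log t) := by
          rw [h1]; exact add_le_add le_rfl (hM t ht)
      _ = (‖θ‖ + 1) * (t / Real.log t) + M := by ring
  -- decomposition of the integral for y ≥ 3
  have hdecomp : ∀ᶠ y : ℝ in atTop,
      (-(fC 0 (1/Real.log y) y * Sc g y)
        - ∫ t in Set.Ioi y, deriv (fC 0 (1/Real.log y)) t * Sc g t)
      = -(u1 y) - (u2 y + u3 y) := by
    filter_upwards [eventually_ge_atTop (3:ℝ)] with y hy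
    have hy0 : (0:ℝ) < y := by linarith
    have hlogy : (1:ℝ) < Real.log y :=
      lt_of_lt_of_le log_three_gt_one (Real.log_le_log (by norm_num) hy)
    have hlogy0 : (0:ℝ) < Real.log y := by linarith
    set δ : ℝ := 1 / Real.log y with hδdef
    have hδ0 : 0 < δ := by positivity
    have hδ1 : δ < 1 := by rw [hδdef, div_lt_one hlogy0]; exact hlogy
    set A : ℝ → ℂ := fun t => θ * (((-(1+δ)) * (t ^ (-1-δ) / Real.log t) : ℝ) : ℂ) with hA
    set B : ℝ → ℂ := fun t => ((phiR' 0 δ t : ℝ) : ℂ) * Eg t with hB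
    -- pointwise identity on Ioi y
    have hpt : Set.EqOn (fun t => deriv (fC 0 δ) t * Sc g t) (fun t => A t + B t)
        (Set.Ioi y) := by
      intro t ht
      rw [Set.mem_Ioi] at ht
      have ht0 : (0:ℝ) < t := by linarith
      have hlt : (0:ℝ) < Real.log t := by
        have := lt_of_lt_of_le log_three_gt_one
          (Real.log_le_log (by norm_num) (by linarith : (3:ℝ) ≤ t)); linarith
      simp only
      rw [deriv_fC ht0, hasymp t (by linarith), mul_add, hA, hB]
      congr 1
      have hre : (phiR' 0 δ t) * (t / Real.log t) = (-(1+δ)) * (t ^ (-1-δ) / Real.log t) := by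
        rw [phiR'_zero]
        have h2 : t ^ (-(1+δ) - 1) * t = t ^ (-1-δ) := by
          rw [← Real.rpow_add_one ht0.ne']; ring_nf
        calc -(1+δ) * t ^ (-(1+δ)-1) * (t / Real.log t)
            = -(1+δ) * ((t ^ (-(1+δ)-1) * t) / Real.log t) := by ring
          _ = -(1+δ) * (t ^ (-1-δ) / Real.log t) := by rw [h2]
      calc ((phiR' 0 δ t : ℝ) : ℂ) * (θ * t / (Real.log t : ℝ))
          = θ * (((phiR' 0 δ t) * (t / Real.log t) : ℝ) : ℂ) := by push_cast; ring
        _ = θ * (((-(1+δ)) * (t ^ (-1-δ) / Real.log t) : ℝ) : ℂ) := by rw [hre]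
    -- integrability of A
    have hAmeas : AEStronglyMeasurable (fun t => (-(1+δ)) * (t ^ (-1-δ) / Real.log t))
        (volume.restrict (Set.Ioi y)) := by
      refine ContinuousOn.aestronglyMeasurable ?_ measurableSet_Ioi
      refine ContinuousOn.mul continuousOn_const ?_
      refine ContinuousOn.div ?_ ?_ ?_
      · exact fun x hx => (Real.continuousAt_rpow_const x _
          (Or.inl (by rw [Set.mem_Ioi] at hx; linarith))).continuousWithinAt
      · exact Real.continuousOn_log.mono fun x hx => by
          rw [Set.mem_Ioi] at hx; simp; linarith
      · intro x hx
        rw [Set.mem_Ioi] at hx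
        have := lt_of_lt_of_le log_three_gt_one
          (Real.log_le_log (by norm_num) (by linarith : (3:ℝ) ≤ x))
        linarith
    have hAR_int : IntegrableOn (fun t => (-(1+δ)) * (t ^ (-1-δ) / Real.log t))
        (Set.Ioi y) := by
      refine Integrable.mono' ((integrableOn_Ioi_rpow_of_lt
        (by linarith : (-1-δ) < -1) hy0).const_mul 2) hAmeas ?_
      refine (ae_restrict_iff' measurableSet_Ioi).mpr (Filter.Eventually.of_forall ?_)
      intro t ht
      rw [Set.mem_Ioi] at ht
      have ht0 : (0:ℝ) < t := by linarith
      have hlt : (1:ℝ) ≤ Real.log t := by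
        have := lt_of_lt_of_le log_three_gt_one
          (Real.log_le_log (by norm_num) (by linarith : (3:ℝ) ≤ t)); linarith
      have hrp : (0:ℝ) < t ^ (-1-δ) := Real.rpow_pos_of_pos ht0 _
      rw [Real.norm_eq_abs, abs_mul, abs_neg, abs_of_nonneg (by linarith : (0:ℝ) ≤ 1+δ),
        abs_of_pos (by positivity : (0:ℝ) < t ^ (-1-δ) / Real.log t)]
      calc (1+δ) * (t ^ (-1-δ) / Real.log t) ≤ 2 * (t ^ (-1-δ) / 1) := by
            refine mul_le_mul (by linarith) ?_ (by positivity) (by norm_num)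
            exact div_le_div_of_nonneg_left hrp.le one_pos hlt
        _ = 2 * t ^ (-1-δ) := by rw [div_one]
    have hA_int : IntegrableOn A (Set.Ioi y) := by
      rw [hA]
      exact (hAR_int.ofReal.const_mul θ)
    -- integrability of B
    have hBmeas : AEStronglyMeasurable B (volume.restrict (Set.Ioi y)) := by
      have hq : AEStronglyMeasurable (fun t => ((phiR' 0 δ t : ℝ) : ℂ))
          (volume.restrict (Set.Ioi y)) := by
        refine ContinuousOn.aestronglyMeasurable ?_ measurableSet_Ioi
        exact Complex.continuous_ofReal.comp_continuousOn
          ((continuousOn_phiR' 0 δ).mono fun x hx => by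
            rw [Set.mem_Ioi] at hx ⊢; linarith)
      have hrest : AEStronglyMeasurable (fun t => Sc g t - θ * t / (Real.log t : ℝ))
          (volume.restrict (Set.Ioi y)) := by
        refine AEStronglyMeasurable.sub (Sc_measurable g).aestronglyMeasurable.restrict ?_
        refine Measurable.aestronglyMeasurable ?_
        exact (measurable_const.mul (Complex.measurable_ofReal.comp measurable_id)).div
          (Complex.measurable_ofReal.comp Real.measurable_log)
      refine (hq.mul hrest).congr ?_
      refine (ae_restrict_iff' measurableSet_Ioi).mpr (Filter.Eventually.of_forall ?_)
      intro t ht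
      rw [Set.mem_Ioi] at ht
      have : Eg t = Sc g t - θ * t / (Real.log t : ℝ) := by
        rw [hasymp t (by linarith)]; ring
      show ((phiR' 0 δ t : ℝ) : ℂ) * (Sc g t - θ * t / (Real.log t : ℝ)) = B t
      rw [hB]
      simp only
      rw [this]
    have hB_int : IntegrableOn B (Set.Ioi y) := by
      refine Integrable.mono' (((hint.mono_set (fun t ht => ?_)).const_mul 2)) hBmeas ?_
      · rw [Set.mem_Ioi] at ht; rw [Set.mem_Ici]; linarith
      refine (ae_restrict_iff' measurableSet_Ioi).mpr (Filter.Eventually.of_forall ?_)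
      intro t ht
      rw [Set.mem_Ioi] at ht
      have ht1 : (1:ℝ) ≤ t := by linarith
      rw [hB]
      simp only
      rw [norm_mul, Complex.norm_real, Real.norm_eq_abs]
      calc |phiR' 0 δ t| * ‖Eg t‖ ≤ (2 / t^2) * ‖Eg t‖ :=
            mul_le_mul_of_nonneg_right (phiR'_zero_abs ht1 hδ0.le hδ1.le) (norm_nonneg _)
        _ = 2 * (‖Eg t‖ / t^2) := by ring
    -- the integral identity
    have hintA : ∫ t in Set.Ioi y, A t = u2 y := by
      rw [hA, hu2]
      simp only
      rw [integral_const_mul]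
      have hoc := Complex.ofRealCLM.integral_comp_comm hAR_int
      simp only [Complex.ofRealCLM_apply] at hoc
      rw [hoc, integral_const_mul, subst_integral hy, ← hIdef, ← hδdef]
    have : ∫ t in Set.Ioi y, deriv (fC 0 δ) t * Sc g t
        = (∫ t in Set.Ioi y, A t) + ∫ t in Set.Ioi y, B t := by
      rw [setIntegral_congr_fun measurableSet_Ioi hpt, integral_add hA_int hB_int]
    rw [this, hintA]
  -- limits of the three pieces
  have hu1lim : Tendsto u1 atTop (nhds 0) := by
    rw [tendsto_zero_iff_norm_tendsto_zero]
    have hbl : Tendsto (fun y : ℝ => (‖θ‖ + 1 + M) * (Real.log y)⁻¹) atTop (nhds 0) := by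
      have := Real.tendsto_log_atTop.inv_tendsto_atTop
      simpa using this.const_mul (‖θ‖ + 1 + M)
    refine squeeze_zero' (Filter.Eventually.of_forall fun y => norm_nonneg _) ?_ hbl
    filter_upwards [eventually_ge_atTop (3:ℝ)] with y hy
    have hy0 : (0:ℝ) < y := by linarith
    have hy1 : (1:ℝ) < y := by linarith
    have hlogy : (1:ℝ) < Real.log y :=
      lt_of_lt_of_le log_three_gt_one (Real.log_le_log (by norm_num) hy)
    have hlogy0 : (0:ℝ) < Real.log y := by linarith
    set δ : ℝ := 1 / Real.log y with hδdef
    have hδ0 : 0 < δ := by positivity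
    have e1 : ‖fC 0 δ y‖ ≤ y⁻¹ := by
      rw [fC, Complex.norm_real, Real.norm_eq_abs]
      have : phiR 0 δ y = y ^ (-(1+δ)) := by simp [phiR]
      rw [this, abs_of_pos (Real.rpow_pos_of_pos hy0 _), ← Real.rpow_neg_one y]
      exact Real.rpow_le_rpow_of_exponent_le hy1.le (by linarith)
    have e2 : y⁻¹ * (y / Real.log y) = (Real.log y)⁻¹ := by field_simp
    have e3 : y⁻¹ ≤ (Real.log y)⁻¹ := by
      have hls : Real.log y ≤ y := Real.log_le_self hy0.le
      exact inv_anti₀ hlogy0 hls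
    rw [hu1]
    simp only [norm_mul]
    calc ‖fC 0 δ y‖ * ‖Sc g y‖ ≤ y⁻¹ * ((‖θ‖ + 1) * (y / Real.log y) + M) := by
          refine mul_le_mul e1 (hScn y hy) (norm_nonneg _) (by positivity)
      _ = (‖θ‖ + 1) * (y⁻¹ * (y / Real.log y)) + M * y⁻¹ := by ring
      _ = (‖θ‖ + 1) * (Real.log y)⁻¹ + M * y⁻¹ := by rw [e2]
      _ ≤ (‖θ‖ + 1) * (Real.log y)⁻¹ + M * (Real.log y)⁻¹ :=
          add_le_add le_rfl (mul_le_mul_of_nonneg_left e3 hM0)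
      _ = (‖θ‖ + 1 + M) * (Real.log y)⁻¹ := by ring
  have hu2lim : Tendsto u2 atTop (nhds (θ * (((-I : ℝ)) : ℂ))) := by
    have h0 : Tendsto (fun y : ℝ => 1/Real.log y) atTop (nhds 0) := by
      exact Tendsto.congr (fun y => (one_div (Real.log y)).symm) Real.tendsto_log_atTop.inv_tendsto_atTop
    have h1 : Tendsto (fun y : ℝ => -(1 + 1/Real.log y) * I) atTop (nhds (-I)) := by
      have := (((tendsto_const_nhds (x := (1:ℝ))).add h0).neg).mul (tendsto_const_nhds (x := I))
      simpa using this
    exact tendsto_const_nhds.mul ((Complex.continuous_ofReal.tendsto _).comp h1)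
  have hu3lim : Tendsto u3 atTop (nhds 0) := by
    rw [tendsto_zero_iff_norm_tendsto_zero]
    have hbl : Tendsto (fun y : ℝ => 2 * ∫ t in Set.Ioi y, ‖Eg t‖ / t^2) atTop (nhds 0) := by
      simpa using (tail_tendsto_zero hint).const_mul 2
    refine squeeze_zero' (Filter.Eventually.of_forall fun y => norm_nonneg _) ?_ hbl
    filter_upwards [eventually_ge_atTop (3:ℝ)] with y hy
    have hy0 : (0:ℝ) < y := by linarith
    have hlogy : (1:ℝ) < Real.log y :=
      lt_of_lt_of_le log_three_gt_one (Real.log_le_log (by norm_num) hy)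
    have hlogy0 : (0:ℝ) < Real.log y := by linarith
    set δ : ℝ := 1 / Real.log y with hδdef
    have hδ0 : 0 < δ := by positivity
    have hδ1 : δ < 1 := by rw [hδdef, div_lt_one hlogy0]; exact hlogy
    have hsub : Set.Ioi y ⊆ Set.Ici (2:ℝ) := fun t ht => by
      rw [Set.mem_Ioi] at ht; rw [Set.mem_Ici]; linarith
    have hInt2 : IntegrableOn (fun t => 2 * (‖Eg t‖ / t^2)) (Set.Ioi y) :=
      (hint.mono_set hsub).const_mul 2
    rw [hu3]
    simp only
    calc ‖∫ t in Set.Ioi y, ((phiR' 0 δ t : ℝ) : ℂ) * Eg t‖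
        ≤ ∫ t in Set.Ioi y, 2 * (‖Eg t‖ / t^2) := by
          refine norm_integral_le_of_norm_le hInt2 ?_
          refine (ae_restrict_iff' measurableSet_Ioi).mpr (Filter.Eventually.of_forall ?_)
          intro t ht
          rw [Set.mem_Ioi] at ht
          have ht1 : (1:ℝ) ≤ t := by linarith
          rw [norm_mul, Complex.norm_real, Real.norm_eq_abs]
          calc |phiR' 0 δ t| * ‖Eg t‖ ≤ (2 / t^2) * ‖Eg t‖ :=
                mul_le_mul_of_nonneg_right (phiR'_zero_abs ht1 hδ0.le hδ1.le) (norm_nonneg _)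
            _ = 2 * (‖Eg t‖ / t^2) := by ring
      _ = 2 * ∫ t in Set.Ioi y, ‖Eg t‖ / t^2 := by rw [integral_const_mul]
  have hcomb : Tendsto (fun y => -(u1 y) - (u2 y + u3 y)) atTop
      (nhds (-(0:ℂ) - (θ * (((-I : ℝ)) : ℂ) + 0))) :=
    (hu1lim.neg).sub (hu2lim.add hu3lim)
  have hval : -(0:ℂ) - (θ * (((-I : ℝ)) : ℂ) + 0) = θ * ((I : ℝ) : ℂ) := by
    push_cast
    ring
  rw [hval] at hcomb
  exact Tendsto.congr' (hdecomp.mono fun y h => h.symm) hcomb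

/-- Tail estimate for twisted prime sums: if `Σ_{p ≤ t} g(p) = θ t/log t + E_g(t)` with
`E_g(t) = o(t/log t)` and `∫_2^∞ |E_g(t)| t^{−2} dt < ∞`, then
`Σ_{p > y} g(p) cos(s log p)/p^{1 + 1/log y} = O(1)` uniformly in `y ≥ 3` and `s` in compact
subsets of `ℝ`, and for `s = 0` the sum tends to `θ ∫_1^∞ e^{−u} du/u` as `y → ∞`. -/
theorem stmt18 (θ : ℂ) (g : ℕ → ℂ) (Eg : ℝ → ℂ)
    (hasymp : ∀ t : ℝ, 2 ≤ t →
      (∑ p ∈ Finset.filter Nat.Prime (Finset.range (Nat.floor t + 1)), g p)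
        = θ * (t : ℂ) / (Real.log t : ℂ) + Eg t)
    (hsmall : Asymptotics.IsLittleO Filter.atTop Eg (fun t => t / Real.log t))
    (hint : IntegrableOn (fun t => ‖Eg t‖ / t ^ 2) (Set.Ici 2)) :
    (∀ K : Set ℝ, IsCompact K → ∃ C : ℝ, ∀ y : ℝ, 3 ≤ y → ∀ s ∈ K, ∃ L : ℂ,
        Tendsto (fun T : ℕ => primeTailSum g y s T) atTop (nhds L) ∧ ‖L‖ ≤ C) ∧
    ∃ F : ℝ → ℂ,
      (∀ y : ℝ, 3 ≤ y → Tendsto (fun T : ℕ => primeTailSum g y 0 T) atTop (nhds (F y))) ∧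
      Tendsto F atTop
        (nhds (θ * ((∫ u in Set.Ioi (1 : ℝ), Real.exp (-u) / u : ℝ) : ℂ))) := by
  have hasymp' : ∀ t : ℝ, 2 ≤ t → Sc g t = θ * t / (Real.log t : ℝ) + Eg t := by
    intro t ht
    rw [Sc_eq_filter]
    exact hasymp t ht
  obtain ⟨M, hM0, hM⟩ := exists_M hasymp' hsmall
  constructor
  · intro K hK
    obtain ⟨R, hR⟩ := hK.isBounded.subset_closedBall 0
    refine ⟨(R + 3) * (‖θ‖ + 1 + M), fun y hy s hs => ?_⟩
    obtain ⟨h1, h2⟩ := master hasymp' hM0 hM hy s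
    refine ⟨_, h1, le_trans h2 ?_⟩
    have hsR : |s| ≤ R := by
      have := hR hs
      rwa [Metric.mem_closedBall, Real.dist_eq, sub_zero] at this
    have hpos : (0:ℝ) ≤ ‖θ‖ + 1 + M := by positivity
    nlinarith
  · refine ⟨fun y => -(fC 0 (1/Real.log y) y * Sc g y)
      - ∫ t in Set.Ioi y, deriv (fC 0 (1/Real.log y)) t * Sc g t, fun y hy => ?_, ?_⟩
    · exact (master hasymp' hM0 hM hy 0).1
    · exact F_tendsto hasymp' hM0 hM hint
end
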